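/- arXiv:2003.01015 — 4 statements merged into one kernel-verified Lean document; each statement's English description precedes it below -/
import Mathlib

section
/- Let R be a Lie conformal superalgebra of type (r,s) with annihilation Lie superalgebra A(R). For a ∈ R define a_λ = Σ_{K∈S_{r,s}} (−1)^{p_K} (λ_{K̄}/f(K)) y_K a ∈ A(R)[[λ]]. Then for all a,b ∈ R one has [a_λ, b_μ] = [a_λ b]_{λ+μ}, where on the right-hand side the λ-bracket [a_λ b] = Σ_{J} (λ_J/f(J)) (a_J b) is evaluated by the rule (c)_ν = Σ_K (−1)^{p_K} (ν_{K̄}/f(K)) y_K c at ν = λ+μ. -/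
/-!
# Core framework: Lie conformal superalgebras of type (r,s)

We fix nonnegative integers `r`, `s`.  Indices of variables are modeled by
`SIdx r s = Fin r ⊕ Fin s`, with `Sum.inl` the even indices and `Sum.inr` the odd ones.

An element of `⋀[λ] ⊗ M` (for `M` an `𝔽`-module) is encoded by its coordinates in the
monomial basis `λ^N · ξ_S` (with `N` a finitely supported exponent vector for the even
variables, and `S` a finite set of odd variables, the odd part taken in increasing order).
Thus `⋀[λ] ⊗ M` is encoded as `PolyM 𝔽 r s M := (SKey r s) →₀ M`.
-/

open Finsupp

variable (𝔽 : Type) [Field 𝔽]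

/-- Variable indices: `inl` are the even indices (1,…,r), `inr` the odd ones (r+1,…,r+s). -/
abbrev SIdx (r s : ℕ) := Sum (Fin r) (Fin s)

/-- The parity of an index. -/
def iparity {r s : ℕ} : SIdx r s → ZMod 2
  | Sum.inl _ => 0
  | Sum.inr _ => 1

/-- A monomial key: exponents of the even variables and the (sorted) set of odd variables. -/
abbrev SKey (r s : ℕ) := (Fin r →₀ ℕ) × Finset (Fin s)

/-- The parity of the monomial `λ_K`. -/
def keyParity {r s : ℕ} (K : SKey r s) : ZMod 2 := (K.2.card : ZMod 2)

/-- The length (number of letters) of the monomial `λ_K`. -/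
def keyLen {r s : ℕ} (K : SKey r s) : ℕ := (K.1.sum fun _ n => n) + K.2.card

/-- `f(K) = ∏ᵢ mᵢ(K)!` (odd variables occur with multiplicity ≤ 1). -/
def keyFact {r s : ℕ} (K : SKey r s) : ℕ := K.1.prod fun _ n => n.factorial

/-- `(-1)^parity` as an element of the field. -/
def sgn (t : ZMod 2) : 𝔽 := (-1 : 𝔽) ^ t.val

/-- `⋀[λ] ⊗ M` in the monomial basis encoding. -/
abbrev PolyM (r s : ℕ) (M : Type) [AddCommGroup M] [Module 𝔽 M] := SKey r s →₀ M

/-- `⋀[λ,μ] ⊗ M`, with the first key the `λ`-part and the second the `μ`-part. -/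
abbrev PolyM2 (r s : ℕ) (M : Type) [AddCommGroup M] [Module 𝔽 M] :=
  (SKey r s × SKey r s) →₀ M

variable {r s : ℕ} {M N : Type} [AddCommGroup M] [Module 𝔽 M] [AddCommGroup N] [Module 𝔽 N]

/-- Number of "inversions" between two sets of odd indices: pairs (i,j) ∈ A×B with j < i. -/
def crossCount {n : ℕ} (A B : Finset (Fin n)) : ℕ :=
  ((A ×ˢ B).filter fun p => p.2 < p.1).card

/-- The Koszul sign appearing when multiplying `ξ_A · ξ_B` (zero if `A`, `B` are not
disjoint). -/
def mergeSign {n : ℕ} (A B : Finset (Fin n)) : 𝔽 :=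
  if Disjoint A B then (-1 : 𝔽) ^ crossCount A B else 0

/-- The Koszul sign of the term `x_A y_B` in the expansion of `∏_{k ∈ A ⊔ B} (x_k + y_k)`
(the product over `A ⊔ B` in increasing order). -/
def splitSign {n : ℕ} (A B : Finset (Fin n)) : 𝔽 := (-1 : 𝔽) ^ crossCount A B

/-- Product of binomial coefficients `∏ᵢ choose (P i) (Q i)`. -/
def mchoose {r : ℕ} (P Q : Fin r →₀ ℕ) : ℕ := P.prod fun i n => n.choose (Q i)

/-- Left multiplication by the variable `λᵢ` on `⋀[λ] ⊗ M`. -/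
noncomputable def lamMul (i : SIdx r s) : PolyM 𝔽 r s M →ₗ[𝔽] PolyM 𝔽 r s M :=
  Finsupp.lsum 𝔽 fun K =>
    match i with
    | Sum.inl j => Finsupp.lsingle (K.1 + Finsupp.single j 1, K.2)
    | Sum.inr j =>
        if j ∈ K.2 then 0
        else ((-1 : 𝔽) ^ (K.2.filter (· < j)).card) • Finsupp.lsingle (K.1, insert j K.2)

variable {𝔽}

/-- Coefficientwise (left) action of an odd/even operator `D i` on `⋀[λ] ⊗ M`:
`∂ᵢ · (λ_K c) = (-1)^{p(i)p(K)} λ_K (∂ᵢ c)`. -/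
noncomputable def coeffD (D : SIdx r s → Module.End 𝔽 M) (i : SIdx r s) :
    PolyM 𝔽 r s M →ₗ[𝔽] PolyM 𝔽 r s M :=
  Finsupp.lsum 𝔽 fun K => sgn 𝔽 (iparity i * keyParity K) • (Finsupp.lsingle K ∘ₗ D i)

/-- Right action of `∂ᵢ` on an element of `⋀[λ] ⊗ M` of total parity `π`:
`(λ_K c) ∂ᵢ = (-1)^{p(i)p(c)} λ_K (∂ᵢ c)`, where `p(c) = π + p(K)`. -/
noncomputable def rightD (D : SIdx r s → Module.End 𝔽 M) (i : SIdx r s) (π : ZMod 2) :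
    PolyM 𝔽 r s M →ₗ[𝔽] PolyM 𝔽 r s M :=
  Finsupp.lsum 𝔽 fun K => sgn 𝔽 (iparity i * (π + keyParity K)) • (Finsupp.lsingle K ∘ₗ D i)

variable (𝔽)

/-- Right multiplication by `λᵢ` on an element of `⋀[λ] ⊗ M` of total parity `π`. -/
noncomputable def rightLam (i : SIdx r s) (π : ZMod 2) :
    PolyM 𝔽 r s M →ₗ[𝔽] PolyM 𝔽 r s M :=
  Finsupp.lsum 𝔽 fun K =>
    match i with
    | Sum.inl j => Finsupp.lsingle (K.1 + Finsupp.single j 1, K.2)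
    | Sum.inr j =>
        if j ∈ K.2 then 0
        else (sgn 𝔽 (π + keyParity K) * (-1 : 𝔽) ^ (K.2.filter fun t => j < t).card) •
          Finsupp.lsingle (K.1, insert j K.2)

variable {𝔽}

/-- The operator `-(λᵢ + ∂ᵢ)` on `⋀[λ] ⊗ M` (with `∂ᵢ` acting on coefficients). -/
noncomputable def substVarOp (D : SIdx r s → Module.End 𝔽 M) (i : SIdx r s) :
    Module.End 𝔽 (PolyM 𝔽 r s M) :=
  -(lamMul 𝔽 i + coeffD D i)

/-- The operator `∏_{k ∈ K} (-(λ_k + ∂_k))` (in the canonical increasing order of `K`). -/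
noncomputable def substNegOpKey (D : SIdx r s → Module.End 𝔽 M) (K : SKey r s) :
    Module.End 𝔽 (PolyM 𝔽 r s M) :=
  (((K.1.support.sort (· ≤ ·)).map fun j => (substVarOp D (Sum.inl j)) ^ (K.1 j)).prod) *
    (((K.2.sort (· ≤ ·)).map fun j => substVarOp D (Sum.inr j)).prod)

/-- The substitution `λ ↦ -λ-∂` on `⋀[λ] ⊗ M` (with `∂` acting on the coefficients),
used in the skew-symmetry axiom. -/
noncomputable def substNeg (D : SIdx r s → Module.End 𝔽 M) :
    PolyM 𝔽 r s M →ₗ[𝔽] PolyM 𝔽 r s M :=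
  Finsupp.lsum 𝔽 fun K =>
    (substNegOpKey D K : PolyM 𝔽 r s M →ₗ[𝔽] PolyM 𝔽 r s M) ∘ₗ
      Finsupp.lsingle ((0 : Fin r →₀ ℕ), (∅ : Finset (Fin s)))

/-- Given an action `T` (e.g. a `λ`-bracket or a module action), the operation
`a_λ` applied to an element of `⋀[μ] ⊗ M`, i.e. `x ↦ [a_λ x]` with values in
`⋀[λ,μ] ⊗ M`; `πa` is the parity of `a`. -/
noncomputable def actLam (T : N →ₗ[𝔽] M →ₗ[𝔽] PolyM 𝔽 r s M) (a : N) (πa : ZMod 2) :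
    PolyM 𝔽 r s M →ₗ[𝔽] PolyM2 𝔽 r s M :=
  Finsupp.lsum 𝔽 fun Kmu =>
    (Finsupp.lsum 𝔽 fun Klam =>
        (sgn 𝔽 (keyParity Kmu * (πa + keyParity Klam))) • Finsupp.lsingle (Klam, Kmu)) ∘ₗ
      T a

/-- Given an action `T`, the operation `b_μ` applied to an element of `⋀[λ] ⊗ M`,
with values in `⋀[λ,μ] ⊗ M`; `πb` is the parity of `b`. -/
noncomputable def actMu (T : N →ₗ[𝔽] M →ₗ[𝔽] PolyM 𝔽 r s M) (b : N) (πb : ZMod 2) :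
    PolyM 𝔽 r s M →ₗ[𝔽] PolyM2 𝔽 r s M :=
  Finsupp.lsum 𝔽 fun Klam =>
    (sgn 𝔽 (πb * keyParity Klam)) •
      ((Finsupp.lsum 𝔽 fun Kmu => Finsupp.lsingle (Klam, Kmu)) ∘ₗ T b)

/-- Given a linear map `T : R → ⋀[ν] ⊗ M` (e.g. `d ↦ [d_ν c]`), this computes
`Σ_K λ_K · (T (d_K))|_{ν := λ+μ}` for an input `Σ_K λ_K d_K`, i.e. the term
`[[a_λ b]_{λ+μ} c]` of the conformal Jacobi identity. -/
noncomputable def jacSubst {R : Type} [AddCommGroup R] [Module 𝔽 R]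
    (T : R →ₗ[𝔽] PolyM 𝔽 r s M) : PolyM 𝔽 r s R →ₗ[𝔽] PolyM2 𝔽 r s M :=
  Finsupp.lsum 𝔽 fun K =>
    (Finsupp.lsum 𝔽 fun P =>
      ∑ q ∈ Finset.HasAntidiagonal.antidiagonal P.1, ∑ S1 ∈ P.2.powerset,
        ((mchoose P.1 q.1 : 𝔽) * splitSign 𝔽 S1 (P.2 \ S1) * mergeSign 𝔽 K.2 S1) •
          Finsupp.lsingle ((K.1 + q.1, K.2 ∪ S1), (q.2, P.2 \ S1))) ∘ₗ T

variable (𝔽)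

/-- The data of a Lie conformal superalgebra of type `(r,s)`: a ℤ/2-grading,
the (left) action of the generators `∂ᵢ` of `⋀[∂]`, and the `λ`-bracket with values in
`⋀[λ] ⊗ R` (encoded in the monomial basis). -/
structure LCSAData (r s : ℕ) (R : Type) [AddCommGroup R] [Module 𝔽 R] where
  grading : ZMod 2 → Submodule 𝔽 R
  D : SIdx r s → Module.End 𝔽 R
  br : R →ₗ[𝔽] R →ₗ[𝔽] PolyM 𝔽 r s R

variable {𝔽}

/-- The axioms of a Lie conformal superalgebra of type `(r,s)` (Definition 2.1):
conformal sesquilinearity (left and right), conformal skew-symmetry, and the conformal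
Jacobi identity, together with compatibility of all data with the ℤ/2-grading. -/
structure IsLCSA {R : Type} [AddCommGroup R] [Module 𝔽 R] (A : LCSAData 𝔽 r s R) : Prop where
  internal : DirectSum.IsInternal A.grading
  D_parity : ∀ i k, ∀ x ∈ A.grading k, A.D i x ∈ A.grading (k + iparity i)
  D_comm : ∀ i j, A.D i ∘ₗ A.D j = sgn 𝔽 (iparity i * iparity j) • (A.D j ∘ₗ A.D i)
  br_parity : ∀ (j k : ZMod 2), ∀ a ∈ A.grading j, ∀ b ∈ A.grading k, ∀ K,
      A.br a b K ∈ A.grading (j + k + keyParity K)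
  sesq_left : ∀ i a b, A.br (A.D i a) b = - lamMul 𝔽 i (A.br a b)
  sesq_right : ∀ i (j k : ZMod 2), ∀ a ∈ A.grading j, ∀ b ∈ A.grading k,
      A.br a (A.D i b) =
        sgn 𝔽 (iparity i * k) •
          (rightD A.D i (j + k) (A.br a b) + rightLam 𝔽 i (j + k) (A.br a b))
  skew : ∀ (j k : ZMod 2), ∀ a ∈ A.grading j, ∀ b ∈ A.grading k,
      A.br b a = - (sgn 𝔽 (j * k)) • substNeg A.D (A.br a b)
  jacobi : ∀ (j k : ZMod 2), ∀ a ∈ A.grading j, ∀ b ∈ A.grading k, ∀ c,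
      actLam A.br a j (A.br b c) - sgn 𝔽 (j * k) • actMu A.br b k (A.br a c) =
        jacSubst (A.br.flip c) (A.br a b)

/-! ## The affinization and the annihilation algebra -/

variable (𝔽) in
/-- The left derivative `∂_{y_i} y_K`, as the map sending a coefficient `a` to the
element `(∂_{y_i} y_K) a` of `⋀[y] ⊗ M`. -/
noncomputable def lderTerm (i : SIdx r s) (K : SKey r s) : M →ₗ[𝔽] PolyM 𝔽 r s M :=
  match i with
  | Sum.inl j => (K.1 j : 𝔽) • Finsupp.lsingle (K.1 - Finsupp.single j 1, K.2)
  | Sum.inr j =>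
      if j ∈ K.2 then ((-1 : 𝔽) ^ (K.2.filter (· < j)).card) •
        Finsupp.lsingle (K.1, K.2.erase j)
      else 0

/-- Auxiliary: the scalar produced by the iterated right derivative
`ξ_S ∂_{y_{j₁}} ∂_{y_{j₂}} ⋯` on the odd variables (the convention of the paper for
expressions `y_M (∂_y)_J`, cf. Lemma 2.6). -/
def oddRDerAux {n : ℕ} : List (Fin n) → Finset (Fin n) → ℤ
  | [], _ => 1
  | j :: rest, S =>
      if j ∈ S then (-(-1 : ℤ) ^ ((S.filter fun t => j < t).card)) * oddRDerAux rest (S.erase j)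
      else 0

/-- The scalar `ξ_S (∂_y)_T` (odd part of `y_M (∂_y)_J`). -/
def oddRDer {n : ℕ} (S T : Finset (Fin n)) : ℤ := oddRDerAux (T.sort (· ≤ ·)) S

/-- The falling-factorial scalar of `y^M (∂_y)^J` on the even variables. -/
def evenFall {r : ℕ} (M J : Fin r →₀ ℕ) : ℕ := J.prod fun i k => (M i).descFactorial k

/-- The `y`-monomial key of `(y_M (∂_y)_J) y_N`. -/
noncomputable def annKey (M J N : SKey r s) : SKey r s := ((M.1 - J.1) + N.1, (M.2 \ J.2) ∪ N.2)

variable (𝔽) in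
/-- The scalar coefficient of `μ (annKey M J N) (a_J b)` in the bracket
`[y_M a, y_N b]` of the annihilation algebra (`πa` is the parity of `a`). -/
noncomputable def annCoef (M N J : SKey r s) (πa : ZMod 2) : 𝔽 :=
  (evenFall M.1 J.1 : 𝔽) * ((oddRDer M.2 J.2 : ℤ) : 𝔽) *
    sgn 𝔽 ((πa + keyParity J) * keyParity N) * mergeSign 𝔽 (M.2 \ J.2) N.2

variable (𝔽) in
/-- The relations defining the annihilation algebra `A(R) = R̃ / ∂̃ R̃`: the elements
`∂̃ᵢ (y_K a) = (-1)^{p(i) p(K)} y_K (∂ᵢ a) + (∂_{yᵢ} y_K) a`. -/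
def annRelSet {R : Type} [AddCommGroup R] [Module 𝔽 R] (A : LCSAData 𝔽 r s R) :
    Set (SKey r s →₀ R) :=
  Set.range fun x : SIdx r s × SKey r s × R =>
    sgn 𝔽 (iparity x.1 * keyParity x.2.1) • Finsupp.single x.2.1 (A.D x.1 x.2.2) +
      lderTerm 𝔽 x.1 x.2.1 x.2.2

/-! ## Statement 1: the annihilation algebra is a Lie superalgebra

`A(R) = R̃/∂̃R̃` is realized as the quotient of the span of the monomials `y_M a` by the
span of the elements `∂̃ᵢ(y_K a)`; its bracket is pinned down on the classes of the
monomials by `[y_M a, b y_N] = Σ_J (1/f(J)) (y_M (∂_y)_J)(a_J b) y_N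
= [(y_M a)_λ (b y_N)]|_{λ=0}` (expanded in the monomial bases, with the Koszul signs).
The theorem asserts that such a bracket exists (i.e. the formula is well defined on the
quotient) and satisfies the axioms of a Lie superalgebra. -/

variable {R : Type} [AddCommGroup R] [Module 𝔽 R]

variable (𝔽) in
/-- The annihilation algebra `A(R) = R̃ / ∂̃ R̃` (as a vector superspace). -/
abbrev AnnQ {r s : ℕ} (A : LCSAData 𝔽 r s R) :=
  (SKey r s →₀ R) ⧸ Submodule.span 𝔽 (annRelSet 𝔽 A)

variable (𝔽) in
/-- The class of the monomial `y_K a` in `A(R)`. -/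
noncomputable def muQ {r s : ℕ} (A : LCSAData 𝔽 r s R) (K : SKey r s) (a : R) : AnnQ 𝔽 A :=
  Submodule.Quotient.mk (Finsupp.single K a)

variable (𝔽) in
/-- The ℤ/2-grading of `A(R)`: `y_K a` has parity `p(a) + p(K)`. -/
noncomputable def annGrading {r s : ℕ} (A : LCSAData 𝔽 r s R) (π : ZMod 2) :
    Submodule 𝔽 (AnnQ 𝔽 A) :=
  Submodule.span 𝔽
    {x | ∃ (K : SKey r s) (a : R), a ∈ A.grading (π + keyParity K) ∧ x = muQ 𝔽 A K a}


/-! ## Statement 4 (Proposition 2.8): `[a_λ, b_μ] = [a_λ b]_{λ+μ}`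

For `a ∈ R` set `a_λ = Σ_K (-1)^{p_K} (λ_{K̄}/f(K)) y_K a ∈ A(R)[[λ]]`.  Both sides of
`[a_λ, b_μ] = [a_λ b]_{λ+μ}` are formal series in `λ, μ` with coefficients in `A(R)`;
the theorem asserts the equality of the coefficients of each monomial `λ_{K_λ} μ_{K_μ}`
(taken in the canonical normal form), for all `K_λ, K_μ`. -/

variable {R : Type} [AddCommGroup R] [Module 𝔽 R]

/-- The sign `λ_{K̄} = revSign K · λ_K` produced by reversing a canonical monomial. -/
def revSign (𝔽 : Type) [Field 𝔽] {r s : ℕ} (K : SKey r s) : 𝔽 :=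
  (-1 : 𝔽) ^ (K.2.card.choose 2)

variable (𝔽) in
/-- The coefficient of `λ_{K_λ} μ_{K_μ}` in `[a_λ b]_{λ+μ}` attached to the `λ`-monomial
`J` of `[a_λ b]`: the class `y_S r_J` is multiplied by this scalar, where
`S = ((K_λ - J)ₑᵥ + (K_μ)ₑᵥ, (K_λ \ J)ₒ ∪ (K_μ)ₒ)`. -/
noncomputable def rhsCoef {r s : ℕ} (Kl Km J : SKey r s) : 𝔽 :=
  if J.1 ≤ Kl.1 ∧ J.2 ⊆ Kl.2 ∧ Disjoint (Kl.2 \ J.2) Km.2 then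
    (sgn 𝔽 (keyParity ((Kl.1 - J.1 + Km.1, (Kl.2 \ J.2) ∪ Km.2) : SKey r s))) *
      ((keyFact ((Kl.1 - J.1 + Km.1, (Kl.2 \ J.2) ∪ Km.2) : SKey r s) : 𝔽))⁻¹ *
      (mchoose (Kl.1 - J.1 + Km.1) (Kl.1 - J.1) : 𝔽) *
      (-1 : 𝔽) ^ (((Kl.2 \ J.2).card.choose 2) + (Km.2.card.choose 2)) *
      (-1 : 𝔽) ^ (crossCount Km.2 (Kl.2 \ J.2)) *
      mergeSign 𝔽 J.2 (Kl.2 \ J.2)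
  else 0

section FundamentalAux

lemma parity_core (S2 aa t bb cS ca ct cb cat cta cab cba E4 E6 bpi ba bt at' : ℕ)
    (hS2 : S2 = aa + t)
    (hcS : cS = ca + ct + at')
    (hE4 : E4 = bpi + ba + bt)
    (hE6 : E6 = bpi + bt)
    (hcat : cat + cta = at')
    (hcab : cab + cba = ba) :
    ((S2 + bb) + cS + cb + E4 + (t + ct + cat) + E6 + cab) % 2
      = ((aa + bb) + (ca + cb) + cba + cta) % 2 := by omega

lemma two_mul_choose_two_succ : ∀ n : ℕ, 2 * (n+1).choose 2 = (n+1) * n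
  | 0 => rfl
  | (k+1) => by
      rw [Nat.choose_succ_succ, Nat.choose_one_right, Nat.mul_add, two_mul_choose_two_succ k]
      ring

lemma choose_two_add (a t : ℕ) : (a + t).choose 2 = a.choose 2 + t.choose 2 + a * t := by
  rcases a with _ | k
  · simp
  rcases t with _ | j
  · simp
  have ha := two_mul_choose_two_succ k
  have ht := two_mul_choose_two_succ j
  apply Nat.eq_of_mul_eq_mul_left (show 0 < 2 by norm_num)
  rw [Nat.mul_add, Nat.mul_add, ha, ht]
  have h2 : k + 1 + (j + 1) = k + j + 1 + 1 := by ring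
  rw [h2, two_mul_choose_two_succ (k + j + 1)]
  ring

variable {𝔽 : Type} [Field 𝔽]

lemma neg_one_pow_congr' {m n : ℕ} (h : m % 2 = n % 2) : (-1 : 𝔽)^m = (-1 : 𝔽)^n := by
  rw [neg_one_pow_eq_pow_mod_two m, neg_one_pow_eq_pow_mod_two n, h]

lemma sgn_natCast' (m : ℕ) : sgn 𝔽 ((m : ZMod 2)) = (-1 : 𝔽)^m := by
  rw [sgn, ZMod.val_natCast, ← neg_one_pow_eq_pow_mod_two]

lemma oddRDerAux_eq_zero {n : ℕ} : ∀ (L : List (Fin n)) (S : Finset (Fin n)) (j : Fin n),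
    j ∈ L → j ∉ S → oddRDerAux L S = 0
  | [], _, j, hj, _ => absurd hj List.not_mem_nil
  | k :: rest, S, j, hj, hjS => by
    simp only [oddRDerAux]
    by_cases hk : k ∈ S
    · rw [if_pos hk]
      rcases List.mem_cons.mp hj with h | h
      · exact absurd hk (h ▸ hjS)
      · rw [oddRDerAux_eq_zero rest (S.erase k) j h
          (fun hmem => hjS (Finset.mem_of_mem_erase hmem)), mul_zero]
    · exact if_neg hk

lemma oddRDerAux_formula {n : ℕ} : ∀ (L : List (Fin n)) (S : Finset (Fin n)),
    L.Pairwise (· < ·) → (∀ j ∈ L, j ∈ S) →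
    oddRDerAux L S =
      (-1 : ℤ) ^ (L.length + (L.map fun j => (S.filter fun t => j < t).card).sum)
  | [], S, _, _ => by simp [oddRDerAux]
  | j :: rest, S, hsort, hmem => by
    have hjS : j ∈ S := hmem j List.mem_cons_self
    have hlt : ∀ k ∈ rest, j < k := fun k hk => (List.pairwise_cons.mp hsort).1 k hk
    have hrestmem : ∀ k ∈ rest, k ∈ S.erase j := fun k hk =>
      Finset.mem_erase.mpr ⟨(hlt k hk).ne', hmem k (List.mem_cons_of_mem j hk)⟩
    have ih := oddRDerAux_formula rest (S.erase j) (List.pairwise_cons.mp hsort).2 hrestmem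
    have hmap : (rest.map fun k => ((S.erase j).filter fun t => k < t).card)
        = rest.map fun k => (S.filter fun t => k < t).card := by
      apply List.map_congr_left
      intro k hk
      rw [Finset.filter_erase, Finset.erase_eq_of_notMem]
      intro hmem'
      exact absurd (Finset.mem_filter.mp hmem').2 (hlt k hk).asymm
    simp only [oddRDerAux, if_pos hjS, ih, hmap]
    rw [List.length_cons, List.map_cons, List.sum_cons]
    ring

lemma sum_map_sort {n : ℕ} (T : Finset (Fin n)) (f : Fin n → ℕ) :
    ((T.sort (· ≤ ·)).map f).sum = ∑ j ∈ T, f j := by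
  have h0 : ∑ j ∈ T, f j = (Multiset.map f T.val).sum := rfl
  rw [h0, ← Finset.sort_eq T (· ≤ ·), Multiset.map_coe, Multiset.sum_coe]

lemma sum_filter_lt_card {n : ℕ} (T : Finset (Fin n)) :
    (∑ j ∈ T, ((T.filter fun t => j < t).card)) = T.card.choose 2 := by
  induction T using Finset.induction_on with
  | empty => simp
  | @insert a T' ha ih =>
    rw [Finset.sum_insert ha]
    have h1 : ((insert a T').filter fun t => a < t) = T'.filter fun t => a < t := by
      rw [Finset.filter_insert, if_neg (lt_irrefl a)]
    have h2 : ∀ j ∈ T', (((insert a T').filter fun t => j < t).card)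
        = ((T'.filter fun t => j < t).card) + (if j < a then 1 else 0) := by
      intro j hj
      rw [Finset.filter_insert]
      by_cases hja : j < a
      · rw [if_pos hja, if_pos hja,
          Finset.card_insert_of_notMem (fun hmem' => ha (Finset.mem_of_mem_filter _ hmem'))]
      · rw [if_neg hja, if_neg hja, add_zero]
    rw [h1, Finset.sum_congr rfl h2, Finset.sum_add_distrib]
    have h3 : (∑ j ∈ T', if j < a then 1 else 0) = (T'.filter fun j => j < a).card :=
      (Finset.card_filter _ _).symm
    have h6 : (T'.filter fun j => ¬ a < j) = T'.filter fun j => j < a := by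
      apply Finset.filter_congr
      intro j hj
      have hne : j ≠ a := fun h => ha (h ▸ hj)
      simp only [not_lt]
      exact ⟨fun h => lt_of_le_of_ne h hne, fun h => le_of_lt h⟩
    have h4 : (T'.filter fun t => a < t).card + (T'.filter fun j => j < a).card = T'.card := by
      rw [← h6, Finset.card_filter_add_card_filter_not (s := T') (p := fun t => a < t)]
    have h5 : (T'.card + 1).choose 2 = T'.card + T'.card.choose 2 := by
      rw [Nat.choose_succ_succ, Nat.choose_one_right]
    rw [ih, Finset.card_insert_of_notMem ha, h3, h5]
    omega

lemma crossCount_eq_sum {n : ℕ} (A B : Finset (Fin n)) :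
    crossCount A B = ∑ j ∈ B, ((A.filter fun t => j < t).card) := by
  rw [crossCount, Finset.card_filter, Finset.sum_product, Finset.sum_comm]
  refine Finset.sum_congr rfl fun j _ => ?_
  rw [Finset.card_filter]

lemma crossCount_add_crossCount {n : ℕ} (A B : Finset (Fin n)) (h : Disjoint A B) :
    crossCount A B + crossCount B A = A.card * B.card := by
  rw [crossCount, crossCount, Finset.card_filter, Finset.card_filter,
    Finset.sum_product, Finset.sum_product, Finset.sum_comm (s := B)]
  rw [← Finset.sum_add_distrib]
  have : ∀ i ∈ A, ((∑ j ∈ B, if (i, j).2 < (i, j).1 then 1 else 0) +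
      ∑ j ∈ B, if (j, i).2 < (j, i).1 then 1 else 0) = B.card := by
    intro i hi
    rw [← Finset.sum_add_distrib]
    have : ∀ j ∈ B, ((if (i, j).2 < (i, j).1 then 1 else 0) +
        if (j, i).2 < (j, i).1 then 1 else 0) = 1 := by
      intro j hj
      have hne : i ≠ j := fun he => (Finset.disjoint_left.mp h hi) (he ▸ hj)
      rcases lt_or_gt_of_ne hne with hlt | hgt
      · simp [hlt, hlt.asymm]
      · simp [hgt, hgt.asymm]
    rw [Finset.sum_congr rfl this, Finset.sum_const, smul_eq_mul, mul_one]
  rw [Finset.sum_congr rfl this, Finset.sum_const, smul_eq_mul]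

lemma oddRDer_formula {n : ℕ} (S T : Finset (Fin n)) (h : T ⊆ S) :
    oddRDer S T =
      (-1 : ℤ) ^ (T.card + T.card.choose 2 + crossCount (S \ T) T) := by
  rw [oddRDer, oddRDerAux_formula _ _ (Finset.sortedLT_sort T).pairwise
    (fun j hj => h ((Finset.mem_sort _).mp hj))]
  congr 1
  rw [Finset.length_sort, sum_map_sort]
  have hsplit : ∀ j : Fin n, (S.filter fun t => j < t)
      = (T.filter fun t => j < t) ∪ ((S \ T).filter fun t => j < t) := by
    intro j
    rw [← Finset.filter_union, Finset.union_sdiff_of_subset h]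
  have hcard : ∀ j ∈ T, (S.filter fun t => j < t).card
      = (T.filter fun t => j < t).card + ((S \ T).filter fun t => j < t).card := by
    intro j _
    rw [hsplit j, Finset.card_union_of_disjoint
      (Finset.disjoint_filter_filter Finset.disjoint_sdiff)]
  rw [Finset.sum_congr rfl hcard, Finset.sum_add_distrib, sum_filter_lt_card,
    crossCount_eq_sum]
  omega

lemma even_index_nat (m q n : ℕ) (h : q ≤ m) :
    (m - q + n).factorial * m.descFactorial q
      = m.factorial * n.factorial * ((m - q + n).choose (m - q)) := by
  have h1 : (m - q + n).choose (m - q) * (m - q).factorial * n.factorial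
      = (m - q + n).factorial := by
    have := Nat.choose_mul_factorial_mul_factorial (Nat.le_add_right (m - q) n)
    rwa [Nat.add_sub_cancel_left] at this
  have h2 : m.choose q * q.factorial * (m - q).factorial = m.factorial :=
    Nat.choose_mul_factorial_mul_factorial h
  rw [Nat.descFactorial_eq_factorial_mul_choose, ← h1, ← h2]
  ring

lemma even_part_nat {r : ℕ} (P Q N : Fin r →₀ ℕ) (h : Q ≤ P) :
    ((P - Q + N).prod fun _ n => n.factorial) * evenFall P Q
      = ((P.prod fun _ n => n.factorial) * (N.prod fun _ n => n.factorial))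
        * mchoose (P - Q + N) (P - Q) := by
  classical
  set U : Finset (Fin r) := P.support ∪ N.support ∪ Q.support ∪ (P - Q + N).support with hU
  have hPU : P.support ⊆ U := by intro i hi; simp only [hU, Finset.mem_union, Finsupp.mem_support_iff] at hi ⊢; tauto
  have hNU : N.support ⊆ U := by intro i hi; simp only [hU, Finset.mem_union, Finsupp.mem_support_iff] at hi ⊢; tauto
  have hQU : Q.support ⊆ U := by intro i hi; simp only [hU, Finset.mem_union, Finsupp.mem_support_iff] at hi ⊢; tauto
  have hSU : (P - Q + N).support ⊆ U := by intro i hi; simp only [hU, Finset.mem_union, Finsupp.mem_support_iff] at hi ⊢; tauto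
  have eP : (P.prod fun _ n => n.factorial) = ∏ i ∈ U, (P i).factorial := by
    rw [Finsupp.prod]
    apply Finset.prod_subset hPU
    intro i _ hi
    rw [Finsupp.notMem_support_iff.mp hi]
    rfl
  have eN : (N.prod fun _ n => n.factorial) = ∏ i ∈ U, (N i).factorial := by
    rw [Finsupp.prod]
    apply Finset.prod_subset hNU
    intro i _ hi
    rw [Finsupp.notMem_support_iff.mp hi]
    rfl
  have eS : ((P - Q + N).prod fun _ n => n.factorial)
      = ∏ i ∈ U, ((P - Q + N) i).factorial := by
    rw [Finsupp.prod]
    apply Finset.prod_subset hSU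
    intro i _ hi
    rw [Finsupp.notMem_support_iff.mp hi]
    rfl
  have eE : evenFall P Q = ∏ i ∈ U, (P i).descFactorial (Q i) := by
    rw [evenFall, Finsupp.prod]
    apply Finset.prod_subset hQU
    intro i _ hi
    rw [Finsupp.notMem_support_iff.mp hi]
    exact Nat.descFactorial_zero _
  have eC : mchoose (P - Q + N) (P - Q) = ∏ i ∈ U, ((P - Q + N) i).choose ((P - Q) i) := by
    rw [mchoose, Finsupp.prod]
    apply Finset.prod_subset hSU
    intro i _ hi
    have h0 : (P - Q + N) i = 0 := Finsupp.notMem_support_iff.mp hi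
    have h0' : (P - Q) i = 0 := by
      have := Finsupp.add_apply (P - Q) N i
      omega
    rw [h0, h0', Nat.choose_zero_right]
  rw [eP, eN, eS, eE, eC, ← Finset.prod_mul_distrib, ← Finset.prod_mul_distrib,
    ← Finset.prod_mul_distrib]
  refine Finset.prod_congr rfl fun i _ => ?_
  have hqi : Q i ≤ P i := Finsupp.le_def.mp h i
  have happ : (P - Q + N) i = P i - Q i + N i := by
    rw [Finsupp.add_apply, Finsupp.tsub_apply]
  have happ' : (P - Q) i = P i - Q i := Finsupp.tsub_apply P Q i
  rw [happ, happ']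
  exact even_index_nat (P i) (Q i) (N i) hqi

lemma keyFact_ne_zero {r' s' : ℕ} (K : SKey r' s') : (keyFact K : ℕ) ≠ 0 := by
  have : 0 < keyFact K := by
    rw [keyFact, Finsupp.prod]
    exact Finset.prod_pos fun i _ => Nat.factorial_pos _
  omega

end FundamentalAux

lemma inv_mul_eq_of_nat {𝔽 : Type} [Field 𝔽] [CharZero 𝔽] {a b e c : ℕ}
    (ha : a ≠ 0) (hb : b ≠ 0) (h : b * e = a * c) :
    ((a : ℕ) : 𝔽)⁻¹ * e = ((b : ℕ) : 𝔽)⁻¹ * c := by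
  have ha' : ((a : ℕ) : 𝔽) ≠ 0 := Nat.cast_ne_zero.mpr ha
  have hb' : ((b : ℕ) : 𝔽) ≠ 0 := Nat.cast_ne_zero.mpr hb
  have h' : ((b : ℕ) : 𝔽) * e = ((a : ℕ) : 𝔽) * c := by exact_mod_cast congrArg (Nat.cast : ℕ → 𝔽) h
  field_simp
  linear_combination h'

lemma key_scalar {𝔽 : Type} [Field 𝔽] [CharZero 𝔽] {r s : ℕ} (Kl Km J : SKey r s) (πa : ZMod 2) :
    (sgn 𝔽 (keyParity Kl + keyParity Km) * revSign 𝔽 Kl * revSign 𝔽 Km *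
        sgn 𝔽 (keyParity Km * (πa + keyParity Kl)) *
        (((keyFact Kl * keyFact Km : ℕ) : 𝔽))⁻¹) * annCoef 𝔽 Kl Km J πa
      = rhsCoef 𝔽 Kl Km J := by
  by_cases hc : J.1 ≤ Kl.1 ∧ J.2 ⊆ Kl.2 ∧ Disjoint (Kl.2 \ J.2) Km.2
  case neg =>
    rw [rhsCoef, if_neg hc]
    have hz : annCoef 𝔽 Kl Km J πa = 0 := by
      by_cases h1 : J.1 ≤ Kl.1
      · by_cases h2 : J.2 ⊆ Kl.2
        · have h3 : ¬ Disjoint (Kl.2 \ J.2) Km.2 := fun h => hc ⟨h1, h2, h⟩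
          rw [annCoef, mergeSign, if_neg h3, mul_zero]
        · obtain ⟨j, hjJ, hjK⟩ := Finset.not_subset.mp h2
          have hodd0 : oddRDer Kl.2 J.2 = 0 := by
            rw [oddRDer]
            exact oddRDerAux_eq_zero _ _ j ((Finset.mem_sort _).mpr hjJ) hjK
          rw [annCoef, hodd0]
          push_cast
          ring
      · have hex : ∃ i, ¬ J.1 i ≤ Kl.1 i := by
          by_contra hall
          push_neg at hall
          exact h1 (Finsupp.le_def.mpr hall)
        obtain ⟨i, hi⟩ := hex
        have hz2 : evenFall Kl.1 J.1 = 0 := by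
          rw [evenFall, Finsupp.prod]
          apply Finset.prod_eq_zero (i := i)
          · rw [Finsupp.mem_support_iff]; omega
          · exact Nat.descFactorial_eq_zero_iff_lt.mpr (by omega)
        rw [annCoef, hz2]
        push_cast
        ring
    rw [hz, mul_zero]
  case pos =>
    obtain ⟨h1, h2, h3⟩ := hc
    rw [rhsCoef, if_pos ⟨h1, h2, h3⟩]
    have hTA : Disjoint J.2 (Kl.2 \ J.2) := Finset.disjoint_sdiff
    have hcardKl : Kl.2.card = (Kl.2 \ J.2).card + J.2.card :=
      (Finset.card_sdiff_add_card_eq_card h2).symm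
    have hπ : ((πa.val : ℕ) : ZMod 2) = πa := ZMod.natCast_rightInverse πa
    have hf1 : sgn 𝔽 (keyParity Kl + keyParity Km) = (-1 : 𝔽) ^ (Kl.2.card + Km.2.card) := by
      rw [keyParity, keyParity, ← Nat.cast_add, sgn_natCast']
    have hf4 : sgn 𝔽 (keyParity Km * (πa + keyParity Kl))
        = (-1 : 𝔽) ^ (Km.2.card * (πa.val + Kl.2.card)) := by
      rw [keyParity, keyParity]
      conv_lhs => rw [← hπ]
      rw [← Nat.cast_add, ← Nat.cast_mul, sgn_natCast']
    have hf6 : sgn 𝔽 ((πa + keyParity J) * keyParity Km)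
        = (-1 : 𝔽) ^ ((πa.val + J.2.card) * Km.2.card) := by
      rw [keyParity, keyParity]
      conv_lhs => rw [← hπ]
      rw [← Nat.cast_add, ← Nat.cast_mul, sgn_natCast']
    have hg1 : sgn 𝔽 (keyParity ((Kl.1 - J.1 + Km.1, (Kl.2 \ J.2) ∪ Km.2) : SKey r s))
        = (-1 : 𝔽) ^ ((Kl.2 \ J.2).card + Km.2.card) := by
      rw [keyParity]
      show sgn 𝔽 ((((Kl.2 \ J.2) ∪ Km.2).card : ZMod 2)) = _
      rw [Finset.card_union_of_disjoint h3, sgn_natCast']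
    have hodd : ((oddRDer Kl.2 J.2 : ℤ) : 𝔽)
        = (-1 : 𝔽) ^ (J.2.card + J.2.card.choose 2 + crossCount (Kl.2 \ J.2) J.2) := by
      rw [oddRDer_formula _ _ h2]
      push_cast
      ring
    have hm7 : mergeSign 𝔽 (Kl.2 \ J.2) Km.2 = (-1 : 𝔽) ^ crossCount (Kl.2 \ J.2) Km.2 := by
      rw [mergeSign, if_pos h3]
    have hgm : mergeSign 𝔽 J.2 (Kl.2 \ J.2) = (-1 : 𝔽) ^ crossCount J.2 (Kl.2 \ J.2) := by
      rw [mergeSign, if_pos hTA]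
    have heven : (((keyFact Kl * keyFact Km : ℕ) : 𝔽))⁻¹ * (evenFall Kl.1 J.1 : 𝔽)
        = ((keyFact ((Kl.1 - J.1 + Km.1, (Kl.2 \ J.2) ∪ Km.2) : SKey r s) : ℕ) : 𝔽)⁻¹ *
          (mchoose (Kl.1 - J.1 + Km.1) (Kl.1 - J.1) : 𝔽) := by
      apply inv_mul_eq_of_nat
      · exact Nat.mul_ne_zero (keyFact_ne_zero Kl) (keyFact_ne_zero Km)
      · exact keyFact_ne_zero _
      · exact even_part_nat Kl.1 J.1 Km.1 h1
    have hsign : (-1 : 𝔽) ^ ((Kl.2.card + Km.2.card) + Kl.2.card.choose 2 + Km.2.card.choose 2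
          + Km.2.card * (πa.val + Kl.2.card)
          + (J.2.card + J.2.card.choose 2 + crossCount (Kl.2 \ J.2) J.2)
          + (πa.val + J.2.card) * Km.2.card
          + crossCount (Kl.2 \ J.2) Km.2)
        = (-1 : 𝔽) ^ (((Kl.2 \ J.2).card + Km.2.card)
          + ((Kl.2 \ J.2).card.choose 2 + Km.2.card.choose 2)
          + crossCount Km.2 (Kl.2 \ J.2) + crossCount J.2 (Kl.2 \ J.2)) := by
      apply neg_one_pow_congr'
      refine parity_core _ _ _ _ _ _ _ _ _ _ _ _ _ _
        (Km.2.card * πa.val) (Km.2.card * (Kl.2 \ J.2).card) (Km.2.card * J.2.card)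
        ((Kl.2 \ J.2).card * J.2.card) ?_ ?_ ?_ ?_ ?_ ?_
      · exact hcardKl
      · rw [hcardKl]; exact choose_two_add _ _
      · rw [hcardKl]; ring
      · ring
      · exact crossCount_add_crossCount _ _ hTA.symm
      · exact (crossCount_add_crossCount _ _ h3).trans (Nat.mul_comm _ _)
    calc (sgn 𝔽 (keyParity Kl + keyParity Km) * revSign 𝔽 Kl * revSign 𝔽 Km *
        sgn 𝔽 (keyParity Km * (πa + keyParity Kl)) *
        (((keyFact Kl * keyFact Km : ℕ) : 𝔽))⁻¹) * annCoef 𝔽 Kl Km J πa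
        = ((((keyFact Kl * keyFact Km : ℕ) : 𝔽))⁻¹ * (evenFall Kl.1 J.1 : 𝔽)) *
          (-1 : 𝔽) ^ ((Kl.2.card + Km.2.card) + Kl.2.card.choose 2 + Km.2.card.choose 2
            + Km.2.card * (πa.val + Kl.2.card)
            + (J.2.card + J.2.card.choose 2 + crossCount (Kl.2 \ J.2) J.2)
            + (πa.val + J.2.card) * Km.2.card
            + crossCount (Kl.2 \ J.2) Km.2) := by
          rw [annCoef, hf1, hf4, hf6, hodd, hm7, revSign, revSign]
          ring
      _ = (((keyFact ((Kl.1 - J.1 + Km.1, (Kl.2 \ J.2) ∪ Km.2) : SKey r s) : ℕ) : 𝔽)⁻¹ *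
            (mchoose (Kl.1 - J.1 + Km.1) (Kl.1 - J.1) : 𝔽)) *
          (-1 : 𝔽) ^ (((Kl.2 \ J.2).card + Km.2.card)
            + ((Kl.2 \ J.2).card.choose 2 + Km.2.card.choose 2)
            + crossCount Km.2 (Kl.2 \ J.2) + crossCount J.2 (Kl.2 \ J.2)) := by
          rw [heven, hsign]
      _ = _ := by
          rw [hg1, hgm]
          ring
/-- **Proposition 2.8.**  Let `R` be a Lie conformal superalgebra of type `(r,s)` and
`A(R)` its annihilation algebra, with bracket `bL` pinned on monomial classes by the
defining formula.  Then `[a_λ, b_μ] = [a_λ b]_{λ+μ}`, coefficientwise in the monomials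
`λ_{K_λ} μ_{K_μ}`. -/
theorem fundamental_identity [CharZero 𝔽] [IsAlgClosed 𝔽] {r s : ℕ} (A : LCSAData 𝔽 r s R) (_hA : IsLCSA A)
    (bL : AnnQ 𝔽 A →ₗ[𝔽] AnnQ 𝔽 A →ₗ[𝔽] AnnQ 𝔽 A)
    (hbL : ∀ (πa : ZMod 2), ∀ a ∈ A.grading πa, ∀ b : R, ∀ M N : SKey r s,
      bL (muQ 𝔽 A M a) (muQ 𝔽 A N b) =
        (A.br a b).sum fun J c => annCoef 𝔽 M N J πa • muQ 𝔽 A (annKey M J N) c)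
    (πa πb : ZMod 2) (a b : R) (ha : a ∈ A.grading πa) (hb : b ∈ A.grading πb) :
    ∀ Kl Km : SKey r s,
      (sgn 𝔽 (keyParity Kl + keyParity Km) * revSign 𝔽 Kl * revSign 𝔽 Km *
            sgn 𝔽 (keyParity Km * (πa + keyParity Kl)) *
            (((keyFact Kl * keyFact Km : ℕ) : 𝔽))⁻¹) •
          bL (muQ 𝔽 A Kl a) (muQ 𝔽 A Km b) =
        (A.br a b).sum fun J c =>
          rhsCoef 𝔽 Kl Km J •
            muQ 𝔽 A ((Kl.1 - J.1 + Km.1, (Kl.2 \ J.2) ∪ Km.2) : SKey r s) c := by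
  intro Kl Km
  rw [hbL πa a ha b Kl Km, Finsupp.smul_sum]
  refine Finsupp.sum_congr fun J hJ => ?_
  rw [smul_smul, key_scalar]
  rfl
end

section
/- Let R be a Lie conformal superalgebra of type (r,s) satisfying Assumptions (1)–(4). Let {d_1,…,d_n} be a basis of g(R)_{−1} ⊕ g(R)_{−3}, d_Ω = d_1⋯d_n, d = deg d_Ω, U = U(g(R)_{<0}), U_d its homogeneous component of degree d, U°_d = ⊕_{I≠Ω} ⋀(∂_y)_{d−deg d_I} d_I, and let ρ: g(R)_0 → F be the character determined by [x, d_Ω] ≡ ρ_x d_Ω mod U°_d. Then for every x ∈ g(R)_0, ρ_x = −str(ad(x)|_{g(R)_{−1} ⊕ g(R)_{−3}}), where str denotes the supertrace. -/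
/-!
# Core framework: Lie conformal superalgebras of type (r,s)

We fix nonnegative integers `r`, `s`.  Indices of variables are modeled by
`SIdx r s = Fin r ⊕ Fin s`, with `Sum.inl` the even indices and `Sum.inr` the odd ones.

An element of `⋀[λ] ⊗ M` (for `M` an `𝔽`-module) is encoded by its coordinates in the
monomial basis `λ^N · ξ_S` (with `N` a finitely supported exponent vector for the even
variables, and `S` a finite set of odd variables, the odd part taken in increasing order).
Thus `⋀[λ] ⊗ M` is encoded as `PolyM 𝔽 r s M := (SKey r s) →₀ M`.
-/

open Finsupp

variable (𝔽 : Type) [Field 𝔽]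

variable {r s : ℕ} {M N : Type} [AddCommGroup M] [Module 𝔽 M] [AddCommGroup N] [Module 𝔽 N]

variable {𝔽}

variable (𝔽)

variable {𝔽}

variable (𝔽)

variable {𝔽}

/-! ## Statement 1: the annihilation algebra is a Lie superalgebra

`A(R) = R̃/∂̃R̃` is realized as the quotient of the span of the monomials `y_M a` by the
span of the elements `∂̃ᵢ(y_K a)`; its bracket is pinned down on the classes of the
monomials by `[y_M a, b y_N] = Σ_J (1/f(J)) (y_M (∂_y)_J)(a_J b) y_N
= [(y_M a)_λ (b y_N)]|_{λ=0}` (expanded in the monomial bases, with the Koszul signs).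
The theorem asserts that such a bracket exists (i.e. the formula is well defined on the
quotient) and satisfies the axioms of a Lie superalgebra. -/

variable {R : Type} [AddCommGroup R] [Module 𝔽 R]

/-! ## Conformal modules and conformal duals -/

section CMod

variable {R : Type} [AddCommGroup R] [Module 𝔽 R]

variable (𝔽) in
/-- The data of a conformal module over a Lie conformal superalgebra: a ℤ/2-grading,
the action of the `∂ᵢ`, and the `λ`-action with values in `⋀[λ] ⊗ M`. -/
structure CModData {r s : ℕ} (A : LCSAData 𝔽 r s R) (M : Type) [AddCommGroup M]
    [Module 𝔽 M] where
  grading : ZMod 2 → Submodule 𝔽 M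
  DM : SIdx r s → Module.End 𝔽 M
  act : R →ₗ[𝔽] M →ₗ[𝔽] PolyM 𝔽 r s M

variable {M : Type} [AddCommGroup M] [Module 𝔽 M]

/-- The axioms (M1) and (M2) of a conformal module, together with grading
compatibility. -/
structure IsCMod {r s : ℕ} {A : LCSAData 𝔽 r s R} (S : CModData 𝔽 A M) : Prop where
  internal : DirectSum.IsInternal S.grading
  DM_parity : ∀ i k, ∀ v ∈ S.grading k, S.DM i v ∈ S.grading (k + iparity i)
  DM_comm : ∀ i j, S.DM i ∘ₗ S.DM j = sgn 𝔽 (iparity i * iparity j) • (S.DM j ∘ₗ S.DM i)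
  act_parity : ∀ (j k : ZMod 2), ∀ a ∈ A.grading j, ∀ v ∈ S.grading k, ∀ K,
      S.act a v K ∈ S.grading (j + k + keyParity K)
  M1 : ∀ i a v, S.act (A.D i a) v = - lamMul 𝔽 i (S.act a v)
  M1' : ∀ i (j : ZMod 2), ∀ a ∈ A.grading j, ∀ v,
      coeffD S.DM i (S.act a v) - sgn 𝔽 (iparity i * j) • S.act a (S.DM i v) =
        - lamMul 𝔽 i (S.act a v)
  M2 : ∀ (j k : ZMod 2), ∀ a ∈ A.grading j, ∀ b ∈ A.grading k, ∀ v,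
      actLam S.act a j (S.act b v) - sgn 𝔽 (j * k) • actMu S.act b k (S.act a v) =
        jacSubst (S.act.flip v) (A.br a b)

variable (𝔽) in
/-- `⋀[λ]` itself, as the target of the maps `f_λ : M → ⋀[λ]`. -/
abbrev PolyF (r s : ℕ) := PolyM 𝔽 r s 𝔽

/-- The defining conditions for a homogeneous element of parity `π` of the conformal
dual `M*`: `f_λ (∂ᵢ m) = (-1)^{pᵢ p(f)} λᵢ f_λ(m)`, together with parity
compatibility. -/
def dualSet {r s : ℕ} {A : LCSAData 𝔽 r s R} (S : CModData 𝔽 A M) (π : ZMod 2) :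
    Set (M →ₗ[𝔽] PolyF 𝔽 r s) :=
  {f | (∀ i m, f (S.DM i m) = sgn 𝔽 (iparity i * π) • lamMul 𝔽 i (f m)) ∧
    ∀ (k : ZMod 2), ∀ m ∈ S.grading k, ∀ K, f m K ≠ 0 → keyParity K = π + k}

/-- Evaluation of an element `Φ = Σ_K λ_K f_K ∈ ⋀[λ] ⊗ M*` on `m ∈ M`: the element
`Σ_K λ_K (f_K)_μ(m)` of `⋀[λ,μ]`. -/
noncomputable def dualEval {r s : ℕ} {M' : Type} [AddCommGroup M'] [Module 𝔽 M']
    (ι : M' →ₗ[𝔽] (M →ₗ[𝔽] PolyF 𝔽 r s)) (Φ : PolyM 𝔽 r s M') (m : M) :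
    PolyM2 𝔽 r s 𝔽 :=
  Φ.sum fun Kl f' => (ι f' m).sum fun Km c => Finsupp.single ((Kl, Km)) c

variable (𝔽) in
/-- The right-hand side of the defining formula of the dual `λ`-action:
`m ↦ f_{μ-λ}(a_λ m)`, expanded in the monomial basis of `⋀[λ,μ]`; `πf` is the parity
of `f`. -/
noncomputable def dualRHS {r s : ℕ} (f : M →ₗ[𝔽] PolyF 𝔽 r s) (πf : ZMod 2)
    (X : PolyM 𝔽 r s M) : PolyM2 𝔽 r s 𝔽 :=
  X.sum fun K mK =>
    (f mK).sum fun P c =>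
      ∑ q ∈ Finset.HasAntidiagonal.antidiagonal P.1, ∑ T ∈ P.2.powerset,
        (sgn 𝔽 (πf * keyParity K) * splitSign 𝔽 T (P.2 \ T) *
            (-1 : 𝔽) ^ (keyLen ((q.2, P.2 \ T) : SKey r s)) * (mchoose P.1 q.1 : 𝔽) *
            sgn 𝔽 ((T.card : ZMod 2) * (((P.2 \ T).card : ℕ) : ZMod 2)) *
            mergeSign 𝔽 K.2 (P.2 \ T) * c) •
          Finsupp.single (((K.1 + q.2, K.2 ∪ (P.2 \ T)), (q.1, T)) :
            SKey r s × SKey r s) (1 : 𝔽)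

variable (𝔽) in
/-- The pinning conditions identifying `(M', ι, S')` as *the* conformal dual of
`(M, S)`: `ι` embeds `M'` onto the space of maps `f_λ` spanned by the homogeneous ones,
the grading matches, and the `⋀[∂]`-structure and `λ`-action of `M'` are given by
`(∂ᵢ f)_λ(m) = -λᵢ f_λ(m)` and `(a_λ f)_μ m = -(-1)^{p(a)p(f)} f_{μ-λ}(a_λ m)`. -/
structure IsConformalDual {r s : ℕ} {A : LCSAData 𝔽 r s R} (S : CModData 𝔽 A M)
    {M' : Type} [AddCommGroup M'] [Module 𝔽 M'] (S' : CModData 𝔽 A M')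
    (ι : M' →ₗ[𝔽] (M →ₗ[𝔽] PolyF 𝔽 r s)) : Prop where
  inj : Function.Injective ι
  range : LinearMap.range ι = Submodule.span 𝔽 (dualSet S 0 ∪ dualSet S 1)
  grad : ∀ π : ZMod 2, Submodule.map ι (S'.grading π) = Submodule.span 𝔽 (dualSet S π)
  Dpin : ∀ i f', ι (S'.DM i f') = (- lamMul 𝔽 i) ∘ₗ ι f'
  actpin : ∀ (πa πf : ZMod 2), ∀ a ∈ A.grading πa, ∀ f' ∈ S'.grading πf, ∀ m : M,
      dualEval ι (S'.act a f') m = - sgn 𝔽 (πa * πf) • dualRHS 𝔽 (ι f') πf (S.act a m)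

end CMod

/-! ## ℤ-gradings, Assumptions 3.3, and coherence -/

section Assump

variable {R : Type} [AddCommGroup R] [Module 𝔽 R]

variable (𝔽) in
/-- Additional data on a Lie conformal superalgebra: a ℤ-grading of `R`, and the
induced structure on the annihilation algebra `g(R) ≅ A(R)`: its ℤ-grading, its Lie
bracket, and the distinguished elements `∂_{y_i} ∈ g(R)_{-2}`. -/
structure AnnSetting {r s : ℕ} (A : LCSAData 𝔽 r s R) where
  zg : ℤ → Submodule 𝔽 R
  zL : ℤ → Submodule 𝔽 (AnnQ 𝔽 A)
  bL : AnnQ 𝔽 A →ₗ[𝔽] AnnQ 𝔽 A →ₗ[𝔽] AnnQ 𝔽 A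
  P : SIdx r s → AnnQ 𝔽 A

/-- Assumptions 3.3 on a Lie conformal superalgebra `R` (together with the requisite
structural facts about `g(R)`): (1) `R` is ℤ-graded; (2) the induced ℤ-gradation on
the annihilation algebra has depth at most 3; (3) the homogeneous components of degrees
`-1` and `-3` are purely odd; (4) `g(R)_{-2}` is spanned by the linearly independent
elements `∂_{y_1}, …, ∂_{y_{r+s}}`, which act on `g(R)` as the derivations
`∂_{y_i}`. -/
structure AnnAssumptions {r s : ℕ} {A : LCSAData 𝔽 r s R} (T : AnnSetting 𝔽 A) :
    Prop where
  zg_internal : DirectSum.IsInternal T.zg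
  D_deg : ∀ i (d : ℤ), ∀ x ∈ T.zg d, A.D i x ∈ T.zg (d - 2)
  br_deg : ∀ (d e : ℤ), ∀ a ∈ T.zg d, ∀ b ∈ T.zg e, ∀ K,
      A.br a b K ∈ T.zg (d + e + 2 * keyLen K)
  bL_mu : ∀ (πa : ZMod 2), ∀ a ∈ A.grading πa, ∀ b : R, ∀ M N : SKey r s,
      T.bL (muQ 𝔽 A M a) (muQ 𝔽 A N b) =
        (A.br a b).sum fun J c => annCoef 𝔽 M N J πa • muQ 𝔽 A (annKey M J N) c
  bL_skew : ∀ (πx πy : ZMod 2), ∀ x ∈ annGrading 𝔽 A πx, ∀ y ∈ annGrading 𝔽 A πy,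
      T.bL x y = -(sgn 𝔽 (πx * πy)) • T.bL y x
  bL_jacobi : ∀ (πx πy : ZMod 2), ∀ x ∈ annGrading 𝔽 A πx, ∀ y ∈ annGrading 𝔽 A πy, ∀ z,
      T.bL x (T.bL y z) = T.bL (T.bL x y) z + sgn 𝔽 (πx * πy) • T.bL y (T.bL x z)
  bL_deg : ∀ (d e : ℤ), ∀ x ∈ T.zL d, ∀ y ∈ T.zL e, T.bL x y ∈ T.zL (d + e)
  zL_mu : ∀ (d : ℤ) (K : SKey r s), ∀ a ∈ T.zg d, muQ 𝔽 A K a ∈ T.zL (d + 2 * keyLen K)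
  zL_internal : DirectSum.IsInternal T.zL
  depth : ∀ d : ℤ, d < -3 → T.zL d = ⊥
  odd1 : T.zL (-1) ≤ annGrading 𝔽 A 1
  odd3 : T.zL (-3) ≤ annGrading 𝔽 A 1
  P_mem : ∀ i, T.P i ∈ T.zL (-2)
  P_parity : ∀ i, T.P i ∈ annGrading 𝔽 A (iparity i)
  P_indep : LinearIndependent 𝔽 T.P
  P_span : T.zL (-2) = Submodule.span 𝔽 (Set.range T.P)
  P_bracket : ∀ i (K : SKey r s) (a : R),
      T.bL (T.P i) (muQ 𝔽 A K a) =
        (Submodule.span 𝔽 (annRelSet 𝔽 A)).mkQ (lderTerm 𝔽 i K a)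

variable {M : Type} [AddCommGroup M] [Module 𝔽 M]

variable (𝔽) in
/-- A conformal module is *coherent* if the ideal `I = {x - ad x : x ∈ A(R)_{-2}}` acts
trivially; equivalently (cf. the remark after Definition 3.5): whenever
`y_K a = Σᵢ αᵢ ∂_{y_i}` in `g(R)_{-2}`, the coefficient `v_K` of the expansion
`a_λ v = Σ_H (-1)^{p_H} (λ_{H̄}/f(H)) v_H` satisfies `v_K = -Σᵢ αᵢ ∂ᵢ v`. -/
def Coherent {r s : ℕ} {A : LCSAData 𝔽 r s R} (T : AnnSetting 𝔽 A)
    (S : CModData 𝔽 A M) : Prop :=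
  ∀ (K : SKey r s) (a : R) (α : SIdx r s → 𝔽),
    muQ 𝔽 A K a = ∑ i : SIdx r s, α i • T.P i →
      ∀ v, (sgn 𝔽 (keyParity K) * revSign 𝔽 K * (keyFact K : 𝔽)) • S.act a v K =
        - ∑ i : SIdx r s, α i • S.DM i v

variable (𝔽) in
/-- The correspondence between a conformal module structure and a `D ⋉ A(R)`-module
structure: `a_λ v = Σ_K (-1)^{p_K} (λ_{K̄}/f(K)) (y_K a).v` and `∂ᵢ v = -∂_{yᵢ}.v`. -/
def Corresponds {r s : ℕ} {A : LCSAData 𝔽 r s R} (S : CModData 𝔽 A M)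
    (Da : SIdx r s → Module.End 𝔽 M) (π : AnnQ 𝔽 A →ₗ[𝔽] M →ₗ[𝔽] M) : Prop :=
  (∀ i v, S.DM i v = - Da i v) ∧
    ∀ (a : R) (v : M) (K : SKey r s),
      S.act a v K =
        (sgn 𝔽 (keyParity K) * revSign 𝔽 K * ((keyFact K : 𝔽))⁻¹) • π (muQ 𝔽 A K a) v


end Assump

/-! ## Generalized Verma modules -/

section Verma

variable {R : Type} [AddCommGroup R] [Module 𝔽 R]
variable {MF F : Type} [AddCommGroup MF] [Module 𝔽 MF] [AddCommGroup F] [Module 𝔽 F]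

/-- The operator `∂^K = ∏_{k ∈ K} ∂_k` (canonical order) built from a family of
operators. -/
noncomputable def opPowKey {M : Type} [AddCommGroup M] [Module 𝔽 M] {r s : ℕ}
    (D : SIdx r s → Module.End 𝔽 M) (K : SKey r s) : Module.End 𝔽 M :=
  (((K.1.support.sort (· ≤ ·)).map fun j => (D (Sum.inl j)) ^ (K.1 j)).prod) *
    (((K.2.sort (· ≤ ·)).map fun j => D (Sum.inr j)).prod)

variable (𝔽) in
/-- The data of a generalized Verma module `M(F) = Ind_{g(R)_{≥0}}^{g(R)} F`: the
`g(R)₀`-module `F` with a homogeneous basis `v`, the `g(R)`-module `M(F)` with action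
`α` and the embedding `ιF` of `F`, and a homogeneous basis `d` of
`g(R)_{-1} ⊕ g(R)_{-3}`. -/
structure VermaData {r s : ℕ} {A : LCSAData 𝔽 r s R} (T : AnnSetting 𝔽 A)
    (F MF : Type) [AddCommGroup F] [Module 𝔽 F] [AddCommGroup MF] [Module 𝔽 MF]
    (n ℓ : ℕ) where
  ρ : ↥(T.zL 0) →ₗ[𝔽] Module.End 𝔽 F
  gF : ZMod 2 → Submodule 𝔽 F
  v : Fin ℓ → F
  pv : Fin ℓ → ZMod 2
  α : AnnQ 𝔽 A →ₗ[𝔽] MF →ₗ[𝔽] MF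
  gM : ZMod 2 → Submodule 𝔽 MF
  ιF : F →ₗ[𝔽] MF
  d : Fin n → AnnQ 𝔽 A

variable {n ℓ : ℕ} {r s : ℕ} {A : LCSAData 𝔽 r s R} {T : AnnSetting 𝔽 A}

/-- The element `d_I m = d_{i₁} ⋯ d_{i_k} m` of `M(F)` (indices in increasing order). -/
noncomputable def dProd (V : VermaData 𝔽 T F MF n ℓ) (I : Finset (Fin n)) (m : MF) : MF :=
  (((I.sort (· ≤ ·)).map fun i => (V.α (V.d i) : Module.End 𝔽 MF)).prod) m

/-- The basis element `∂_y^K d_I v_h` of `M(F)` as a free `⋀[∂_y]`-module. -/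
noncomputable def vermaBasisElt (V : VermaData 𝔽 T F MF n ℓ) (K : SKey r s)
    (I : Finset (Fin n)) (h : Fin ℓ) : MF :=
  opPowKey (fun i => (V.α (T.P i) : Module.End 𝔽 MF)) K (dProd V I (V.ιF (V.v h)))

/-- The structure map exhibiting `M(F)` as a free `⋀[∂_y]`-module on the `d_I v_h`. -/
noncomputable def vermaStr (V : VermaData 𝔽 T F MF n ℓ) :
    ((SKey r s × Finset (Fin n) × Fin ℓ) →₀ 𝔽) →ₗ[𝔽] MF :=
  Finsupp.lsum 𝔽 fun p =>
    LinearMap.toSpanSingleton 𝔽 MF (vermaBasisElt V p.1 p.2.1 p.2.2)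

/-- The axioms of a generalized Verma module. -/
structure IsVerma (V : VermaData 𝔽 T F MF n ℓ) : Prop where
  gF_internal : DirectSum.IsInternal V.gF
  v_basis : Function.Bijective (Finsupp.linearCombination 𝔽 V.v)
  v_parity : ∀ h, V.v h ∈ V.gF (V.pv h)
  ρ_parity : ∀ (x : ↥(T.zL 0)) (πx k : ZMod 2), (x : AnnQ 𝔽 A) ∈ annGrading 𝔽 A πx →
      ∀ w ∈ V.gF k, V.ρ x w ∈ V.gF (πx + k)
  ρ_bracket : ∀ (x y z : ↥(T.zL 0)) (πx πy : ZMod 2),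
      (x : AnnQ 𝔽 A) ∈ annGrading 𝔽 A πx → (y : AnnQ 𝔽 A) ∈ annGrading 𝔽 A πy →
      (z : AnnQ 𝔽 A) = T.bL x y →
      V.ρ z = V.ρ x ∘ₗ V.ρ y - sgn 𝔽 (πx * πy) • (V.ρ y ∘ₗ V.ρ x)
  gM_internal : DirectSum.IsInternal V.gM
  α_parity : ∀ (πx k : ZMod 2), ∀ x ∈ annGrading 𝔽 A πx, ∀ m ∈ V.gM k,
      V.α x m ∈ V.gM (πx + k)
  α_bracket : ∀ (πx πy : ZMod 2), ∀ x ∈ annGrading 𝔽 A πx, ∀ y ∈ annGrading 𝔽 A πy,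
      ∀ m, V.α (T.bL x y) m = V.α x (V.α y m) - sgn 𝔽 (πx * πy) • V.α y (V.α x m)
  ιF_inj : Function.Injective V.ιF
  ιF_parity : ∀ k : ZMod 2, ∀ w ∈ V.gF k, V.ιF w ∈ V.gM k
  ιF_equiv : ∀ (x : ↥(T.zL 0)) (w : F), V.α (x : AnnQ 𝔽 A) (V.ιF w) = V.ιF (V.ρ x w)
  pos_kills : ∀ dg : ℤ, 0 < dg → ∀ x ∈ T.zL dg, ∀ w : F, V.α x (V.ιF w) = 0
  d_mem : ∀ i, V.d i ∈ T.zL (-1) ⊔ T.zL (-3)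
  d_odd : ∀ i, V.d i ∈ annGrading 𝔽 A 1
  d_indep : LinearIndependent 𝔽 V.d
  d_span : Submodule.span 𝔽 (Set.range V.d) = T.zL (-1) ⊔ T.zL (-3)
  free : Function.Bijective (vermaStr V)

end Verma

/-! ## Auxiliary material for Lemma 3.13 -/

namespace L313

variable {𝔽 : Type} [Field 𝔽] {M : Type} [AddCommGroup M] [Module 𝔽 M] {r s n : ℕ}

lemma sgn_zero' : sgn 𝔽 (0 : ZMod 2) = 1 := by
  have h : (0 : ZMod 2).val = 0 := rfl
  simp [sgn, h]

lemma sgn_one' : sgn 𝔽 (1 : ZMod 2) = -1 := by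
  have h : (1 : ZMod 2).val = 1 := rfl
  simp [sgn, h]

/-- Apply a linear map to a member of a span. -/
lemma apply_span {S : Set M} {W : Submodule 𝔽 M} (f : M →ₗ[𝔽] M)
    (h : ∀ z ∈ S, f z ∈ W) : ∀ y ∈ Submodule.span 𝔽 S, f y ∈ W := by
  intro y hy
  induction hy using Submodule.span_induction with
  | mem z hz => exact h z hz
  | zero => simpa using W.zero_mem
  | add a b _ _ ha hb => simpa [map_add] using W.add_mem ha hb
  | smul c a _ ha => simpa [map_smul] using W.smul_mem c ha

lemma pairwise_commute_map {ι M' : Type*} [Monoid M'] (L : List ι) (g : ι → M')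
    (h : ∀ a b, Commute (g a) (g b)) : (L.map g).Pairwise Commute := by
  induction L with
  | nil => simp
  | cons a L ih =>
    rw [List.map_cons, List.pairwise_cons]
    refine ⟨fun b hb => ?_, ih⟩
    rcases List.mem_map.mp hb with ⟨t, _, rfl⟩
    exact h a t

/-- Product over a finite set of indices, in increasing order. -/
noncomputable def sP {γ : Type} [LinearOrder γ] (g : γ → Module.End 𝔽 M)
    (S : Finset γ) : Module.End 𝔽 M :=
  ((S.sort (· ≤ ·)).map g).prod

lemma sP_empty {γ : Type} [LinearOrder γ] (g : γ → Module.End 𝔽 M) :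
    sP g (∅ : Finset γ) = 1 := by simp [sP]

lemma sP_singleton {γ : Type} [LinearOrder γ] (g : γ → Module.End 𝔽 M) (a : γ) :
    sP g {a} = g a := by simp [sP, Finset.sort_singleton]

lemma sP_insert {γ : Type} [LinearOrder γ] [DecidableEq γ] (g : γ → Module.End 𝔽 M) {S : Finset γ}
    {a : γ} (ha : a ∉ S) (hle : ∀ b ∈ S, a ≤ b) :
    sP g (insert a S) = g a * sP g S := by
  have h := Finset.sort_insert (r := ((· ≤ ·) : γ → γ → Prop)) hle ha
  rw [sP, h, List.map_cons, List.prod_cons]; rfl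

lemma sP_cons {γ : Type} [LinearOrder γ] [DecidableEq γ] (g : γ → Module.End 𝔽 M) {S : Finset γ}
    (h : S.Nonempty) :
    sP g S = g (S.min' h) * sP g (S.erase (S.min' h)) := by
  conv_lhs => rw [← Finset.insert_erase (S.min'_mem h)]
  exact sP_insert g (Finset.notMem_erase _ _)
    (fun b hb => S.min'_le b (Finset.mem_of_mem_erase hb))

/-- The even part of `opPowKey`. -/
noncomputable def eP (E : SIdx r s → Module.End 𝔽 M) (N : Fin r →₀ ℕ) :
    Module.End 𝔽 M :=
  sP (fun t => E (Sum.inl t) ^ (N t)) N.support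

lemma opPowKey_eq (E : SIdx r s → Module.End 𝔽 M) (K : SKey r s) :
    opPowKey E K = eP E K.1 * sP (fun t => E (Sum.inr t)) K.2 := rfl

lemma eP_zero (E : SIdx r s → Module.End 𝔽 M) : eP E (0 : Fin r →₀ ℕ) = 1 := by
  simp [eP, sP]

/-- Inserting one more letter into a key. -/
noncomputable def addKey (i : SIdx r s) (K : SKey r s) : SKey r s :=
  match i with
  | Sum.inl j => (K.1 + Finsupp.single j 1, K.2)
  | Sum.inr j => (K.1, insert j K.2)

lemma sum_add_single (N : Fin r →₀ ℕ) (j : Fin r) :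
    ((N + Finsupp.single j 1).sum fun _ n => n) = (N.sum fun _ n => n) + 1 := by
  rw [Finsupp.sum_add_index' (fun _ => rfl) (fun _ _ _ => rfl),
    Finsupp.sum_single_index rfl]

lemma keyLen_addKey (i : SIdx r s) (K : SKey r s) :
    keyLen (addKey i K) ≤ keyLen K + 1 := by
  cases i with
  | inl j =>
    simp only [addKey, keyLen, sum_add_single]
    omega
  | inr j =>
    simp only [addKey, keyLen]
    have := Finset.card_insert_le j K.2
    omega

section WithE

variable (E : SIdx r s → Module.End 𝔽 M)
variable (hPP : ∀ a b, E a * E b = sgn 𝔽 (iparity a * iparity b) • (E b * E a))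

include hPP

lemma commOfInl (j : Fin r) (b : SIdx r s) : Commute (E (Sum.inl j)) (E b) := by
  have h := hPP (Sum.inl j) b
  have h0 : iparity (Sum.inl j : SIdx r s) * iparity b = 0 := by
    simp [iparity]
  rw [h0, sgn_zero', one_smul] at h
  exact h

lemma EE_sq [CharZero 𝔽] (j : Fin s) : E (Sum.inr j) * E (Sum.inr j) = 0 := by
  have h := hPP (Sum.inr j) (Sum.inr j)
  have h1 : iparity (Sum.inr j : SIdx r s) * iparity (Sum.inr j : SIdx r s) = 1 := by
    simp [iparity]
  rw [h1, sgn_one', neg_smul, one_smul] at h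
  have h2 : (2 : 𝔽) • (E (Sum.inr j) * E (Sum.inr j)) = 0 := by
    rw [two_smul]; nth_rewrite 1 [h]; exact neg_add_cancel _
  rcases smul_eq_zero.mp h2 with h3 | h3
  · exact absurd h3 two_ne_zero
  · exact h3

lemma oP_mul [CharZero 𝔽] (j : Fin s) (S : Finset (Fin s)) :
    ∃ c : 𝔽, E (Sum.inr j) * sP (fun t => E (Sum.inr t)) S
      = c • sP (fun t => E (Sum.inr t)) (insert j S) := by
  set g : Fin s → Module.End 𝔽 M := fun t => E (Sum.inr t) with hg
  suffices h : ∀ (q : ℕ) (S : Finset (Fin s)), S.card ≤ q → ∀ j : Fin s,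
      ∃ c : 𝔽, g j * sP g S = c • sP g (insert j S) from h S.card S le_rfl j
  intro q
  induction q with
  | zero =>
    intro S hS j
    rw [Finset.card_eq_zero.mp (Nat.le_zero.mp hS)]
    exact ⟨1, by rw [sP_empty, mul_one, one_smul, LawfulSingleton.insert_empty_eq, sP_singleton]⟩
  | succ q ih =>
    intro S hS j
    rcases Finset.eq_empty_or_nonempty S with rfl | hne
    · exact ⟨1, by rw [sP_empty, mul_one, one_smul, LawfulSingleton.insert_empty_eq, sP_singleton]⟩
    set t := S.min' hne with ht
    have hcons : sP g S = g t * sP g (S.erase t) := sP_cons g hne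
    rcases lt_trichotomy j t with hlt | rfl | hgt
    · -- j < t : clean insertion
      have hj : j ∉ S := fun hj => absurd (S.min'_le j hj) (not_le.mpr hlt)
      exact ⟨1, by rw [one_smul, sP_insert g hj (fun b hb => le_of_lt
        (lt_of_lt_of_le hlt (S.min'_le b hb)))]⟩
    · -- j = t : square is zero
      refine ⟨0, ?_⟩
      rw [hcons, ← mul_assoc, EE_sq E hPP, zero_mul, zero_smul]
    · -- j > t
      have hcard : (S.erase t).card ≤ q := by
        have h1 : (S.erase t).card = S.card - 1 :=
          Finset.card_erase_of_mem (S.min'_mem hne)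
        have h2 : 0 < S.card := Finset.card_pos.mpr hne
        omega
      obtain ⟨c', hc'⟩ := ih (S.erase t) hcard j
      have hswap : g j * g t = (-1 : 𝔽) • (g t * g j) := by
        have h := hPP (Sum.inr j) (Sum.inr t)
        have h1 : iparity (Sum.inr j : SIdx r s) * iparity (Sum.inr t : SIdx r s) = 1 := by
          simp [iparity]
        rw [h1, sgn_one'] at h
        exact h
      refine ⟨-c', ?_⟩
      have htj : t ∉ insert j (S.erase t) := by
        simp only [Finset.mem_insert, Finset.mem_erase]
        push_neg
        exact ⟨ne_of_lt hgt, fun h _ => absurd rfl h⟩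
      have hins : sP g (insert t (insert j (S.erase t))) = g t * sP g (insert j (S.erase t)) :=
        sP_insert g htj (by
          intro b hb
          rcases Finset.mem_insert.mp hb with rfl | hb
          · exact le_of_lt hgt
          · exact S.min'_le b (Finset.mem_of_mem_erase hb))
      have hset : insert t (insert j (S.erase t)) = insert j S := by
        rw [Finset.insert_comm, Finset.insert_erase (S.min'_mem hne)]
      calc g j * sP g S = g j * (g t * sP g (S.erase t)) := by rw [hcons]
        _ = (g j * g t) * sP g (S.erase t) := by rw [mul_assoc]
        _ = ((-1 : 𝔽) • (g t * g j)) * sP g (S.erase t) := by rw [hswap]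
        _ = (-1 : 𝔽) • (g t * (g j * sP g (S.erase t))) := by
            rw [smul_mul_assoc, mul_assoc]
        _ = (-1 : 𝔽) • (g t * (c' • sP g (insert j (S.erase t)))) := by rw [hc']
        _ = (-c') • (g t * sP g (insert j (S.erase t))) := by
            rw [mul_smul_comm, smul_smul]; ring_nf
        _ = (-c') • sP g (insert j S) := by rw [← hins, hset]

end WithE

end L313
namespace L313

variable {𝔽 : Type} [Field 𝔽] {M : Type} [AddCommGroup M] [Module 𝔽 M] {r s n : ℕ}

lemma supp_add_single_mem {N : Fin r →₀ ℕ} {j : Fin r} (hj : j ∈ N.support) :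
    (N + Finsupp.single j 1).support = N.support := by
  ext t
  simp only [Finsupp.mem_support_iff, Finsupp.add_apply, Finsupp.single_apply]
  by_cases h : j = t
  · subst h
    have := Finsupp.mem_support_iff.mp hj
    simp only [if_pos rfl]
    omega
  · simp [h]

lemma supp_add_single_not_mem {N : Fin r →₀ ℕ} {j : Fin r} (hj : j ∉ N.support) :
    (N + Finsupp.single j 1).support = insert j N.support := by
  ext t
  simp only [Finsupp.mem_support_iff, Finsupp.add_apply, Finsupp.single_apply,
    Finset.mem_insert]
  by_cases h : j = t
  · subst h
    simp
  · have h' : ¬ t = j := fun hh => h hh.symm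
    simp [h, h']

section WithE2

variable (E : SIdx r s → Module.End 𝔽 M)
variable (hPP : ∀ a b, E a * E b = sgn 𝔽 (iparity a * iparity b) • (E b * E a))

include hPP

lemma bumpList (j : Fin r) : ∀ (L : List (Fin r)), L.Nodup → j ∈ L → ∀ N : Fin r →₀ ℕ,
    (L.map (fun t => E (Sum.inl t) ^ ((N + Finsupp.single j 1 : Fin r →₀ ℕ) t))).prod
      = E (Sum.inl j) * (L.map (fun t => E (Sum.inl t) ^ (N t))).prod := by
  intro L
  induction L with
  | nil => intro _ h; simp at h
  | cons a L ih =>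
    intro hnd hj N
    rw [List.map_cons, List.prod_cons, List.map_cons, List.prod_cons]
    by_cases haj : a = j
    · subst haj
      have hval : (N + Finsupp.single a 1 : Fin r →₀ ℕ) a = N a + 1 := by
        simp [Finsupp.add_apply, Finsupp.single_apply]
      have hL : L.map (fun t => E (Sum.inl t) ^ ((N + Finsupp.single a 1 : Fin r →₀ ℕ) t))
          = L.map (fun t => E (Sum.inl t) ^ (N t)) := by
        apply List.map_congr_left
        intro t ht
        have hta : ¬ (a = t) := fun h => ((List.nodup_cons.mp hnd).1 (h ▸ ht))
        simp [Finsupp.add_apply, Finsupp.single_apply, hta]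
      rw [hval, hL, pow_succ', mul_assoc]
    · have hjL : j ∈ L := by
        rcases List.mem_cons.mp hj with h | h
        · exact absurd h.symm haj
        · exact h
      have hja : ¬ (j = a) := fun h => haj h.symm
      have hval : (N + Finsupp.single j 1 : Fin r →₀ ℕ) a = N a := by
        simp [Finsupp.add_apply, Finsupp.single_apply, hja]
      rw [hval, ih (List.nodup_cons.mp hnd).2 hjL N, ← mul_assoc, ← mul_assoc]
      congr 1
      exact ((commOfInl E hPP j (Sum.inl a)).pow_right (N a)).symm.eq

lemma eP_mul (j : Fin r) (N : Fin r →₀ ℕ) :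
    E (Sum.inl j) * eP E N = eP E (N + Finsupp.single j 1) := by
  by_cases hj : j ∈ N.support
  · rw [eP, eP, supp_add_single_mem hj, sP, sP]
    exact (bumpList E hPP j _ (Finset.sort_nodup _ _) ((Finset.mem_sort _).mpr hj) N).symm
  · rw [eP, eP, supp_add_single_not_mem hj, sP, sP]
    have hNj : N j = 0 := Finsupp.notMem_support_iff.mp hj
    set f := fun t => E (Sum.inl t) ^ ((N + Finsupp.single j 1 : Fin r →₀ ℕ) t) with hf
    have hperm : List.Perm ((insert j N.support).sort (· ≤ ·))
        (j :: N.support.sort (· ≤ ·)) := by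
      refine ((Finset.sort_perm_toList _ _).trans (Finset.toList_insert hj)).trans ?_
      exact List.Perm.cons j (Finset.sort_perm_toList _ _).symm
    have hpair : ∀ a b, Commute (f a) (f b) := fun a b =>
      (commOfInl E hPP a (Sum.inl b)).pow_pow _ _
    have hprodeq := List.Perm.prod_eq' (hperm.map f) (pairwise_commute_map _ f hpair)
    rw [hprodeq, List.map_cons, List.prod_cons]
    have hfj : f j = E (Sum.inl j) := by
      rw [hf]
      simp [Finsupp.add_apply, Finsupp.single_apply, hNj]
    have hmap : (N.support.sort (· ≤ ·)).map f
        = (N.support.sort (· ≤ ·)).map (fun t => E (Sum.inl t) ^ (N t)) := by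
      apply List.map_congr_left
      intro t ht
      have htj : ¬ (j = t) := fun h =>
        hj (h ▸ (Finset.mem_sort (α := Fin r) (· ≤ ·)).mp ht)
      rw [hf]
      simp [Finsupp.add_apply, Finsupp.single_apply, htj]
    rw [hfj, hmap]

omit hPP in
lemma opPow_trivial : opPowKey E ((0 : Fin r →₀ ℕ), (∅ : Finset (Fin s))) = 1 := by
  rw [opPowKey_eq, eP_zero, sP_empty, one_mul]

lemma opPow_mul [CharZero 𝔽] (i : SIdx r s) (K : SKey r s) :
    ∃ c : 𝔽, E i * opPowKey E K = c • opPowKey E (addKey i K) := by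
  cases i with
  | inl j =>
    refine ⟨1, ?_⟩
    rw [one_smul, opPowKey_eq, opPowKey_eq, ← mul_assoc, eP_mul E hPP]
    rfl
  | inr j =>
    obtain ⟨c, hc⟩ := oP_mul E hPP j K.2
    refine ⟨c, ?_⟩
    have hcomm : Commute (E (Sum.inr j)) (eP E K.1) := by
      apply Commute.list_prod_right
      intro x hx
      rcases List.mem_map.mp hx with ⟨t, _, rfl⟩
      exact ((commOfInl E hPP t (Sum.inr j)).symm).pow_right _
    rw [opPowKey_eq, opPowKey_eq, ← mul_assoc, hcomm.eq, mul_assoc, hc, mul_smul_comm]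
    rfl

lemma peel (K : SKey r s) (hK : K ≠ ((0 : Fin r →₀ ℕ), (∅ : Finset (Fin s)))) :
    ∃ (i : SIdx r s) (K' : SKey r s), addKey i K' = K ∧ keyLen K = keyLen K' + 1 ∧
      opPowKey E K = E i * opPowKey E K' := by
  by_cases h1 : K.1 = 0
  · have h2 : K.2 ≠ ∅ := by
      intro h2
      exact hK (Prod.ext h1 h2)
    have hne : K.2.Nonempty := Finset.nonempty_of_ne_empty h2
    set t := K.2.min' hne with htdef
    refine ⟨Sum.inr t, (K.1, K.2.erase t), ?_, ?_, ?_⟩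
    · show (K.1, insert t (K.2.erase t)) = K
      rw [Finset.insert_erase (K.2.min'_mem hne)]
    · show keyLen K = keyLen (K.1, K.2.erase t) + 1
      simp only [keyLen]
      have hce : (K.2.erase t).card = K.2.card - 1 :=
        Finset.card_erase_of_mem (K.2.min'_mem hne)
      have hcp : 0 < K.2.card := Finset.card_pos.mpr hne
      omega
    · rw [opPowKey_eq, opPowKey_eq]
      show eP E K.1 * sP _ K.2 = E (Sum.inr t) * (eP E K.1 * sP _ (K.2.erase t))
      rw [h1, eP_zero, one_mul, one_mul]
      exact sP_cons _ hne
  · have hne : K.1.support.Nonempty := Finsupp.support_nonempty_iff.mpr h1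
    obtain ⟨j, hj⟩ := hne
    have hrec : (K.1 - Finsupp.single j 1) + Finsupp.single j 1 = K.1 := by
      ext u
      have hKj : K.1 j ≠ 0 := Finsupp.mem_support_iff.mp hj
      by_cases h : j = u
      · subst h
        simp only [Finsupp.add_apply, Finsupp.tsub_apply, Finsupp.single_apply,
          if_pos rfl, if_true, eq_self_iff_true]
        omega
      · simp [Finsupp.add_apply, Finsupp.tsub_apply, Finsupp.single_apply, h]
    refine ⟨Sum.inl j, (K.1 - Finsupp.single j 1, K.2), ?_, ?_, ?_⟩
    · show (K.1 - Finsupp.single j 1 + Finsupp.single j 1, K.2) = K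
      rw [hrec]
    · show keyLen K = keyLen (K.1 - Finsupp.single j 1, K.2) + 1
      simp only [keyLen]
      have := sum_add_single (K.1 - Finsupp.single j 1) j
      rw [hrec] at this
      omega
    · rw [opPowKey_eq, opPowKey_eq]
      show eP E K.1 * sP _ K.2 = E (Sum.inl j) * (eP E (K.1 - Finsupp.single j 1) * sP _ K.2)
      rw [← mul_assoc, eP_mul E hPP, hrec]

end WithE2

end L313
namespace L313

section Core

variable {𝔽 : Type} [Field 𝔽] [CharZero 𝔽] {M : Type} [AddCommGroup M] [Module 𝔽 M]
variable {r s n : ℕ}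
variable (E : SIdx r s → Module.End 𝔽 M) (Dd : Fin n → Module.End 𝔽 M) (m₀ : M)

/-- The basis element `∂^K d_I m₀`. -/
noncomputable def BB (K : SKey r s) (I : Finset (Fin n)) : M :=
  opPowKey E K (sP Dd I m₀)

lemma keyLen_triv : keyLen (((0 : Fin r →₀ ℕ), (∅ : Finset (Fin s))) : SKey r s) = 0 := by
  simp [keyLen]

/-- Target set for the straightening lemma. -/
def ESet (K : SKey r s) (I : Finset (Fin n)) (k : Fin n) : Set M :=
  {m | ∃ (K' : SKey r s) (I' : Finset (Fin n)),
    ((K' = K ∧ I' = insert k I ∧ k ∉ I) ∨ keyLen K' + I'.card ≤ keyLen K + I.card) ∧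
    m = BB E Dd m₀ K' I'}

variable (hPP : ∀ a b, E a * E b = sgn 𝔽 (iparity a * iparity b) • (E b * E a))

include hPP in
lemma Emul_BB (i : SIdx r s) (K : SKey r s) (I : Finset (Fin n)) :
    ∃ c : 𝔽, E i (BB E Dd m₀ K I) = c • BB E Dd m₀ (addKey i K) I := by
  obtain ⟨c, hc⟩ := opPow_mul E hPP i K
  refine ⟨c, ?_⟩
  have h := congrArg (fun f : Module.End 𝔽 M => f (sP Dd I m₀)) hc
  simpa [BB, Module.End.mul_apply] using h

include hPP in
lemma EP_apply {g : Module.End 𝔽 M} (hg : g ∈ Submodule.span 𝔽 (Set.range E))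
    (K : SKey r s) (I : Finset (Fin n)) :
    g (BB E Dd m₀ K I) ∈ Submodule.span 𝔽
      {m | ∃ K' : SKey r s, keyLen K' ≤ keyLen K + 1 ∧ m = BB E Dd m₀ K' I} := by
  induction hg using Submodule.span_induction with
  | mem z hz =>
    rcases hz with ⟨i, rfl⟩
    obtain ⟨c, hc⟩ := Emul_BB E Dd m₀ hPP i K I
    rw [hc]
    exact Submodule.smul_mem _ c
      (Submodule.subset_span ⟨addKey i K, keyLen_addKey i K, rfl⟩)
  | zero => simp only [LinearMap.zero_apply]; exact Submodule.zero_mem _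
  | add a b _ _ ha hb => simp only [LinearMap.add_apply]; exact Submodule.add_mem _ ha hb
  | smul c a _ ha => simp only [LinearMap.smul_apply]; exact Submodule.smul_mem _ c ha

variable
  (hDD : ∀ k j : Fin n, ∃ g ∈ Submodule.span 𝔽 (Set.range E),
    ∀ m : M, Dd k (Dd j m) = g m - Dd j (Dd k m))
  (hDP : ∀ (k : Fin n) (i : SIdx r s), ∃ g ∈ Submodule.span 𝔽 (Set.range Dd),
    ∃ cc : 𝔽, ∀ m : M, Dd k (E i m) = g m + cc • E i (Dd k m))

include hPP hDD hDP in
/-- The master straightening lemma. -/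
lemma Estar : ∀ (p : ℕ) (K : SKey r s) (I : Finset (Fin n)) (k : Fin n),
    keyLen K + I.card ≤ p →
    Dd k (BB E Dd m₀ K I) ∈ Submodule.span 𝔽 (ESet E Dd m₀ K I k) := by
  intro p
  induction p using Nat.strong_induction_on with
  | _ p ih =>
  intro K I k hmass
  by_cases hK : K = ((0 : Fin r →₀ ℕ), (∅ : Finset (Fin s)))
  · subst hK
    have hKlen := keyLen_triv (r := r) (s := s)
    have hmass' : I.card ≤ p := by omega
    have hBBI : ∀ I' : Finset (Fin n),
        BB E Dd m₀ ((0 : Fin r →₀ ℕ), (∅ : Finset (Fin s))) I' = sP Dd I' m₀ := by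
      intro I'
      rw [BB, opPow_trivial E]
      rfl
    rcases Finset.eq_empty_or_nonempty I with rfl | hne
    · apply Submodule.subset_span
      refine ⟨((0 : Fin r →₀ ℕ), (∅ : Finset (Fin s))), {k},
        Or.inl ⟨rfl, by simp, by simp⟩, ?_⟩
      rw [hBBI, hBBI, sP_empty, sP_singleton]
      rfl
    · obtain ⟨j₀, hj₀I, hj₀le, hw⟩ : ∃ j₀, j₀ ∈ I ∧ (∀ b ∈ I, j₀ ≤ b) ∧
          BB E Dd m₀ ((0 : Fin r →₀ ℕ), (∅ : Finset (Fin s))) I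
            = Dd j₀ (sP Dd (I.erase j₀) m₀) := by
        refine ⟨I.min' hne, I.min'_mem hne, fun b hb => I.min'_le b hb, ?_⟩
        rw [hBBI, sP_cons Dd hne]
        rfl
      have hcardI : 0 < I.card := Finset.card_pos.mpr hne
      have hcarde : (I.erase j₀).card = I.card - 1 := Finset.card_erase_of_mem hj₀I
      have hsmall : ∀ (K' : SKey r s) (I'' : Finset (Fin n)),
          keyLen K' + I''.card ≤ I.card →
          BB E Dd m₀ K' I'' ∈ Submodule.span 𝔽
            (ESet E Dd m₀ ((0 : Fin r →₀ ℕ), (∅ : Finset (Fin s))) I k) := by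
        intro K' I'' hle
        apply Submodule.subset_span
        exact ⟨K', I'', Or.inr (by omega), rfl⟩
      -- applying a span-of-range-E endomorphism to `sP Dd (I.erase j₀) m₀`
      have hgw : ∀ g' ∈ Submodule.span 𝔽 (Set.range E),
          g' (sP Dd (I.erase j₀) m₀) ∈ Submodule.span 𝔽
            (ESet E Dd m₀ ((0 : Fin r →₀ ℕ), (∅ : Finset (Fin s))) I k) := by
        intro g' hg'
        have h1 := EP_apply E Dd m₀ hPP hg'
          ((0 : Fin r →₀ ℕ), (∅ : Finset (Fin s))) (I.erase j₀)
        rw [hBBI] at h1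
        refine Submodule.span_le.mpr ?_ h1
        rintro z ⟨K', hlen', rfl⟩
        exact hsmall K' (I.erase j₀) (by omega)
      rcases lt_trichotomy k j₀ with hlt | heq | hgt
      · -- clean insertion
        have hkI : k ∉ I := fun h => absurd (hj₀le k h) (not_le.mpr hlt)
        apply Submodule.subset_span
        refine ⟨((0 : Fin r →₀ ℕ), (∅ : Finset (Fin s))), insert k I,
          Or.inl ⟨rfl, rfl, hkI⟩, ?_⟩
        rw [hBBI, hBBI, sP_insert Dd hkI
          (fun b hb => le_of_lt (lt_of_lt_of_le hlt (hj₀le b hb)))]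
        rfl
      · -- k = j₀ : contraction
        subst heq
        obtain ⟨g, hgspan, hgeq⟩ := hDD k k
        have hsq : Dd k (Dd k (sP Dd (I.erase k) m₀))
            = (2⁻¹ : 𝔽) • g (sP Dd (I.erase k) m₀) := by
          have h := hgeq (sP Dd (I.erase k) m₀)
          have h'' : (2 : 𝔽) • Dd k (Dd k (sP Dd (I.erase k) m₀))
              = g (sP Dd (I.erase k) m₀) := by
            rw [two_smul]
            nth_rewrite 1 [h]
            exact sub_add_cancel _ _
          rw [← h'', smul_smul]
          norm_num
        rw [hw, hsq]
        exact Submodule.smul_mem _ _ (hgw g hgspan)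
      · -- k > j₀
        obtain ⟨g, hgspan, hgeq⟩ := hDD k j₀
        rw [hw, hgeq (sP Dd (I.erase j₀) m₀)]
        apply Submodule.sub_mem
        · exact hgw g hgspan
        · -- Dd j₀ (Dd k (sP Dd (I.erase j₀) m₀))
          have hDkw : Dd k (BB E Dd m₀ ((0 : Fin r →₀ ℕ), (∅ : Finset (Fin s)))
              (I.erase j₀)) ∈ Submodule.span 𝔽
                (ESet E Dd m₀ ((0 : Fin r →₀ ℕ), (∅ : Finset (Fin s))) (I.erase j₀) k) :=
            ih (I.card - 1) (by omega) _ _ k (by omega)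
          rw [← hBBI (I.erase j₀)]
          refine apply_span (Dd j₀ : M →ₗ[𝔽] M) ?_ _ hDkw
          rintro z ⟨K', I'', hcond, rfl⟩
          rcases hcond with ⟨hK', hI'', hk⟩ | hle
          · subst hK'; subst hI''
            have hkj : k ≠ j₀ := ne_of_gt hgt
            have hkI : k ∉ I := fun h => hk (Finset.mem_erase.mpr ⟨hkj, h⟩)
            have hj₀n : j₀ ∉ insert k (I.erase j₀) := by
              intro hmem
              rcases Finset.mem_insert.mp hmem with h | h
              · exact (ne_of_lt hgt) h
              · exact (Finset.notMem_erase j₀ I) h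
            have hle' : ∀ b ∈ insert k (I.erase j₀), j₀ ≤ b := by
              intro b hb
              rcases Finset.mem_insert.mp hb with rfl | hb'
              · exact le_of_lt hgt
              · exact hj₀le b (Finset.mem_of_mem_erase hb')
            have hstep : Dd j₀ (BB E Dd m₀ ((0 : Fin r →₀ ℕ), (∅ : Finset (Fin s)))
                (insert k (I.erase j₀)))
                = BB E Dd m₀ ((0 : Fin r →₀ ℕ), (∅ : Finset (Fin s)))
                  (insert j₀ (insert k (I.erase j₀))) := by
              rw [hBBI, hBBI, sP_insert Dd hj₀n hle']
              rfl
            have hset : insert j₀ (insert k (I.erase j₀)) = insert k I := by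
              rw [Finset.insert_comm, Finset.insert_erase hj₀I]
            rw [hstep, hset]
            exact Submodule.subset_span
              ⟨((0 : Fin r →₀ ℕ), (∅ : Finset (Fin s))), insert k I,
                Or.inl ⟨rfl, rfl, hkI⟩, rfl⟩
          · -- small piece
            have h2 := ih (I.card - 1) (by omega) K' I'' j₀ (by omega)
            refine Submodule.span_le.mpr ?_ h2
            rintro z2 ⟨K2, I2, hcond2, rfl⟩
            rcases hcond2 with ⟨h1', h2', _⟩ | hle2
            · have hci := Finset.card_insert_le j₀ I''
              rw [h1', h2']
              exact hsmall K' (insert j₀ I'') (by omega)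
            · exact hsmall K2 I2 (by omega)
  · -- K nontrivial : peel one `∂`
    obtain ⟨i, K', haddK, hlen, hfac⟩ := peel E hPP K hK
    have hsplit : BB E Dd m₀ K I = E i (BB E Dd m₀ K' I) := by
      rw [BB, BB, hfac]
      rfl
    obtain ⟨g, hgspan, cc, hcc⟩ := hDP k i
    rw [hsplit, hcc (BB E Dd m₀ K' I)]
    refine Submodule.add_mem _ ?_ (Submodule.smul_mem _ cc ?_)
    · -- g (BB K' I) with g in the span of the `d`-operators
      clear hcc
      induction hgspan using Submodule.span_induction with
      | mem z hz =>
        rcases hz with ⟨u, rfl⟩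
        have h1 := ih (keyLen K' + I.card) (by omega) K' I u le_rfl
        refine Submodule.span_le.mpr ?_ h1
        rintro z ⟨K2, I2, hcond, rfl⟩
        apply Submodule.subset_span
        refine ⟨K2, I2, Or.inr ?_, rfl⟩
        rcases hcond with ⟨h1', h2', _⟩ | hle
        · have := Finset.card_insert_le u I
          rw [h1', h2']
          omega
        · omega
      | zero => simp only [LinearMap.zero_apply]; exact Submodule.zero_mem _
      | add a b _ _ ha hb => simp only [LinearMap.add_apply]; exact Submodule.add_mem _ ha hb
      | smul c a _ ha => simp only [LinearMap.smul_apply]; exact Submodule.smul_mem _ c ha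
    · -- E i (Dd k (BB K' I))
      have h1 := ih (keyLen K' + I.card) (by omega) K' I k le_rfl
      refine apply_span (E i : M →ₗ[𝔽] M) ?_ _ h1
      rintro z ⟨K2, I2, hcond, rfl⟩
      obtain ⟨c2, hc2⟩ := Emul_BB E Dd m₀ hPP i K2 I2
      rw [hc2]
      apply Submodule.smul_mem
      rcases hcond with ⟨h1', h2', hkI⟩ | hle
      · apply Submodule.subset_span
        refine ⟨K, insert k I, Or.inl ⟨rfl, rfl, hkI⟩, ?_⟩
        rw [h1', h2', ← haddK]
      · apply Submodule.subset_span
        refine ⟨addKey i K2, I2, Or.inr ?_, rfl⟩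
        have := keyLen_addKey i K2
        omega

end Core

end L313
namespace L313

section Core2

variable {𝔽 : Type} [Field 𝔽] [CharZero 𝔽] {M : Type} [AddCommGroup M] [Module 𝔽 M]
variable {r s n : ℕ}
variable (E : SIdx r s → Module.End 𝔽 M) (Dd : Fin n → Module.End 𝔽 M) (m₀ : M)

/-- Target set for the top-level expansion: mass at most `T.card`, and in case of
equality some letter of `I'` is outside `T`. -/
def CSet (T : Finset (Fin n)) : Set M :=
  {m | ∃ (K' : SKey r s) (I' : Finset (Fin n)),
    (keyLen K' + I'.card ≤ T.card ∧
      (keyLen K' + I'.card = T.card → ∃ w ∈ I', w ∉ T)) ∧ m = BB E Dd m₀ K' I'}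

variable (hPP : ∀ a b, E a * E b = sgn 𝔽 (iparity a * iparity b) • (E b * E a))
variable
  (hDD : ∀ k j : Fin n, ∃ g ∈ Submodule.span 𝔽 (Set.range E),
    ∀ m : M, Dd k (Dd j m) = g m - Dd j (Dd k m))
  (hDP : ∀ (k : Fin n) (i : SIdx r s), ∃ g ∈ Submodule.span 𝔽 (Set.range Dd),
    ∃ cc : 𝔽, ∀ m : M, Dd k (E i m) = g m + cc • E i (Dd k m))
variable (X : Module.End 𝔽 M) (c : Fin n → Fin n → 𝔽) (ε : 𝔽)
variable (hX0 : X m₀ = 0)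
variable (hXD : ∀ (j : Fin n) (m : M),
  X (Dd j m) = (∑ i, c i j • Dd i m) + ε • Dd j (X m))

include hPP hDD hDP hX0 hXD in
lemma Cexp : ∀ (q : ℕ) (T : Finset (Fin n)), T.card ≤ q →
    X (sP Dd T m₀) - (∑ j ∈ T, ε ^ (T.filter (· < j)).card * c j j) • sP Dd T m₀ ∈
      Submodule.span 𝔽 (CSet E Dd m₀ T) := by
  intro q
  induction q with
  | zero =>
    intro T hT
    rw [Finset.card_eq_zero.mp (Nat.le_zero.mp hT)]
    rw [sP_empty]
    simp only [Finset.sum_empty, zero_smul, sub_zero]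
    have : (1 : Module.End 𝔽 M) m₀ = m₀ := rfl
    rw [this, hX0]
    exact Submodule.zero_mem _
  | succ q ihq =>
    intro T hT
    rcases Finset.eq_empty_or_nonempty T with rfl | hne
    · rw [sP_empty]
      simp only [Finset.sum_empty, zero_smul, sub_zero]
      have : (1 : Module.End 𝔽 M) m₀ = m₀ := rfl
      rw [this, hX0]
      exact Submodule.zero_mem _
    · obtain ⟨j₀, hj₀T, hj₀le, hdec⟩ : ∃ j₀, j₀ ∈ T ∧ (∀ b ∈ T, j₀ ≤ b) ∧
          sP Dd T m₀ = Dd j₀ (sP Dd (T.erase j₀) m₀) := by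
        refine ⟨T.min' hne, T.min'_mem hne, fun b hb => T.min'_le b hb, ?_⟩
        rw [sP_cons Dd hne]
        rfl
      set T' := T.erase j₀ with hT'def
      have hcardT : 0 < T.card := Finset.card_pos.mpr hne
      have hcardT' : T'.card = T.card - 1 := Finset.card_erase_of_mem hj₀T
      have hj₀T' : j₀ ∉ T' := Finset.notMem_erase j₀ T
      have hTins : insert j₀ T' = T := Finset.insert_erase hj₀T
      set w' := sP Dd T' m₀ with hw'def
      set S' := ∑ j ∈ T', ε ^ (T'.filter (· < j)).card * c j j with hS'def
      set errT := X w' - S' • w' with herrdef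
      have hXw' : X w' = S' • w' + errT := by rw [herrdef]; abel
      have herrmem : errT ∈ Submodule.span 𝔽 (CSet E Dd m₀ T') :=
        ihq T' (by omega)
      -- the sum over T
      have hST : (∑ j ∈ T, ε ^ (T.filter (· < j)).card * c j j)
          = c j₀ j₀ + ε * S' := by
        rw [← hTins, Finset.sum_insert hj₀T']
        have h0 : ((insert j₀ T').filter (· < j₀)).card = 0 := by
          rw [Finset.card_eq_zero, Finset.filter_eq_empty_iff]
          intro t ht
          rcases Finset.mem_insert.mp ht with rfl | ht'
          · exact lt_irrefl _
          · exact not_lt.mpr (hj₀le t (hTins ▸ Finset.mem_insert.mpr (Or.inr ht')))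
        rw [h0, pow_zero, one_mul]
        congr 1
        rw [Finset.mul_sum]
        apply Finset.sum_congr rfl
        intro j hj
        have hj₀j : j₀ < j := by
          have hjT : j ∈ T := hTins ▸ Finset.mem_insert.mpr (Or.inr hj)
          exact lt_of_le_of_ne (hj₀le j hjT) (fun h => hj₀T' (h ▸ hj))
        have hfil : (insert j₀ T').filter (· < j) = insert j₀ (T'.filter (· < j)) := by
          rw [Finset.filter_insert, if_pos hj₀j]
        have hcard : ((insert j₀ T').filter (· < j)).card
            = (T'.filter (· < j)).card + 1 := by
          rw [hfil, Finset.card_insert_of_notMem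
            (fun h => hj₀T' (Finset.mem_of_mem_filter j₀ h))]
        rw [hcard, pow_succ']
        ring
      -- membership of the cross terms
      have hcross : ∀ i, i ≠ j₀ → Dd i w' ∈ Submodule.span 𝔽 (CSet E Dd m₀ T) := by
        intro i hi
        have h1 : Dd i (BB E Dd m₀ ((0 : Fin r →₀ ℕ), (∅ : Finset (Fin s))) T')
            ∈ Submodule.span 𝔽
              (ESet E Dd m₀ ((0 : Fin r →₀ ℕ), (∅ : Finset (Fin s))) T' i) :=
          Estar E Dd m₀ hPP hDD hDP (T'.card) _ _ i (by rw [keyLen_triv]; omega)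
        have hBBT' : BB E Dd m₀ ((0 : Fin r →₀ ℕ), (∅ : Finset (Fin s))) T' = w' := by
          rw [BB, opPow_trivial E]
          rfl
        rw [hBBT'] at h1
        refine Submodule.span_le.mpr ?_ h1
        rintro z ⟨K2, I2, hcond, rfl⟩
        apply Submodule.subset_span
        have hKlen := keyLen_triv (r := r) (s := s)
        rcases hcond with ⟨h1', h2', hiT'⟩ | hle
        · refine ⟨K2, I2, ⟨?_, ?_⟩, rfl⟩
          · rw [h1', h2']
            have := Finset.card_insert_le i T'
            omega
          · intro _
            refine ⟨i, h2' ▸ Finset.mem_insert_self i T', ?_⟩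
            intro hiT
            exact hiT' (Finset.mem_erase.mpr ⟨hi, hiT⟩)
        · exact ⟨K2, I2, ⟨by omega, fun h => absurd h (by omega)⟩, rfl⟩
      -- membership of `Dd j₀` applied to the error term
      have herr2 : Dd j₀ errT ∈ Submodule.span 𝔽 (CSet E Dd m₀ T) := by
        refine apply_span (Dd j₀ : M →ₗ[𝔽] M) ?_ _ herrmem
        rintro z ⟨K', I', ⟨hle', hwit'⟩, rfl⟩
        have h1 : Dd j₀ (BB E Dd m₀ K' I') ∈ Submodule.span 𝔽 (ESet E Dd m₀ K' I' j₀) :=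
          Estar E Dd m₀ hPP hDD hDP (keyLen K' + I'.card) _ _ j₀ le_rfl
        refine Submodule.span_le.mpr ?_ h1
        rintro z2 ⟨K2, I2, hcond, rfl⟩
        apply Submodule.subset_span
        rcases hcond with ⟨h1', h2', hj₀I'⟩ | hle2
        · refine ⟨K2, I2, ⟨?_, ?_⟩, rfl⟩
          · rw [h1', h2']
            have := Finset.card_insert_le j₀ I'
            omega
          · intro heqm
            have heqm' : keyLen K' + I'.card = T'.card := by
              rw [h1', h2'] at heqm
              have h3 : (insert j₀ I').card = I'.card + 1 :=
                Finset.card_insert_of_notMem hj₀I'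
              omega
            obtain ⟨w, hwI', hwT'⟩ := hwit' heqm'
            refine ⟨w, h2' ▸ Finset.mem_insert_of_mem hwI', ?_⟩
            intro hwT
            rcases Finset.mem_insert.mp (hTins ▸ hwT : w ∈ insert j₀ T') with rfl | h
            · exact hj₀I' hwI'
            · exact hwT' h
        · exact ⟨K2, I2, ⟨by omega, fun h => absurd h (by omega)⟩, rfl⟩
      -- final algebra
      have hXD' := hXD j₀ w'
      have hsum : (∑ i, c i j₀ • Dd i w')
          = c j₀ j₀ • Dd j₀ w' + ∑ i ∈ Finset.univ.erase j₀, c i j₀ • Dd i w' :=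
        (Finset.add_sum_erase _ _ (Finset.mem_univ j₀)).symm
      have hfinal : X (sP Dd T m₀)
          - (∑ j ∈ T, ε ^ (T.filter (· < j)).card * c j j) • sP Dd T m₀
          = (∑ i ∈ Finset.univ.erase j₀, c i j₀ • Dd i w') + ε • Dd j₀ errT := by
        rw [hST, hdec, hXD', hXw', map_add, map_smul, hsum]
        rw [smul_add, add_smul, smul_smul]
        abel
      rw [hfinal]
      refine Submodule.add_mem _ ?_ (Submodule.smul_mem _ ε herr2)
      refine Submodule.sum_mem _ ?_
      intro i hi
      exact Submodule.smul_mem _ _ (hcross i (Finset.ne_of_mem_erase hi))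

end Core2

end L313
/-! ## Statement 10 (Lemma 3.13): the character `ρ` -/

variable {R : Type} [AddCommGroup R] [Module 𝔽 R]

variable (𝔽) in
/-- The supertrace of an endomorphism of a *purely odd* space, given by its coefficient
matrix `c` in a basis: `str = -(Σᵢ cᵢᵢ)`. -/
def pureOddSupertrace {n : ℕ} (c : Fin n → Fin n → 𝔽) : 𝔽 := -(∑ i, c i i)

/-- **Lemma 3.13.**  Let `{d₁,…,d_n}` be a basis of `g(R)_{-1} ⊕ g(R)_{-3}`,
`d_Ω = d₁⋯d_n`, and let `ρ_x` be the character of `g(R)₀` determined by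
`[x, d_Ω] ≡ ρ_x d_Ω mod U°_d` in `U(g(R)_{<0})` (realized, as a `g(R)₀`-module
with the adjoint action, inside the Verma module `M(𝔽)` attached to the trivial
one-dimensional module `F = 𝔽`).  Then `ρ_x = -str(ad(x)|_{g(R)_{-1} ⊕ g(R)_{-3}})`,
the supertrace being computed from the coefficient matrix `c` of `ad x` in the (purely
odd) basis `d`. -/
theorem rho_character_eq_neg_supertrace [CharZero 𝔽] [IsAlgClosed 𝔽] {r s : ℕ} (A : LCSAData 𝔽 r s R)
    (_hA : IsLCSA A) (T : AnnSetting 𝔽 A) (_hT : AnnAssumptions T)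
    {MF : Type} [AddCommGroup MF] [Module 𝔽 MF] {n : ℕ}
    (V : VermaData 𝔽 T 𝔽 MF n 1) (_hV : IsVerma V)
    (_htriv : V.ρ = 0) (_hv : V.v = fun _ => (1 : 𝔽))
    (x : ↥(T.zL 0)) (πx : ZMod 2) (_hx : (x : AnnQ 𝔽 A) ∈ annGrading 𝔽 A πx)
    (c : Fin n → Fin n → 𝔽)
    (hc : ∀ j, T.bL (x : AnnQ 𝔽 A) (V.d j) = ∑ i, c i j • V.d i)
    (rx : 𝔽)
    (hrx : V.α (x : AnnQ 𝔽 A) (vermaBasisElt V ((0, ∅) : SKey r s) Finset.univ 0) -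
        rx • vermaBasisElt V ((0, ∅) : SKey r s) Finset.univ 0 ∈
      Submodule.span 𝔽
        {m | ∃ (K : SKey r s) (J : Finset (Fin n)) (h : Fin 1),
          J ≠ Finset.univ ∧ m = vermaBasisElt V K J h}) :
    rx = -pureOddSupertrace 𝔽 c := by
  classical
  set E : SIdx r s → Module.End 𝔽 MF := fun i => V.α (T.P i) with hEdef
  set Dd : Fin n → Module.End 𝔽 MF := fun k => V.α (V.d k) with hDddef
  set m₀ : MF := V.ιF (V.v 0) with hm₀def
  set X : Module.End 𝔽 MF := V.α (x : AnnQ 𝔽 A) with hXdef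
  set ε : 𝔽 := sgn 𝔽 (πx * 1) with hεdef
  have hBB : ∀ (K : SKey r s) (I : Finset (Fin n)),
      L313.BB E Dd m₀ K I = vermaBasisElt V K I 0 := fun _ _ => rfl
  -- deep homogeneous components vanish
  have hdeep : ∀ (d1 d2 : ℤ) (u w : AnnQ 𝔽 A), d1 + d2 < -3 →
      u ∈ T.zL d1 → w ∈ T.zL d2 → T.bL u w = 0 := by
    intro d1 d2 u w hlt hu hw
    have h := _hT.bL_deg d1 d2 u hu w hw
    rw [_hT.depth _ hlt] at h
    exact (Submodule.mem_bot 𝔽).mp h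
  -- brackets of the P's vanish
  have hPPz : ∀ a b, T.bL (T.P a) (T.P b) = 0 := by
    intro a b
    exact hdeep (-2) (-2) _ _ (by norm_num) (_hT.P_mem a) (_hT.P_mem b)
  have hPP : ∀ a b, E a * E b = sgn 𝔽 (iparity a * iparity b) • (E b * E a) := by
    intro a b
    apply LinearMap.ext
    intro m
    have hb := _hV.α_bracket (iparity a) (iparity b) (T.P a) (_hT.P_parity a)
      (T.P b) (_hT.P_parity b) m
    rw [hPPz a b, map_zero, LinearMap.zero_apply] at hb
    have hb' := (sub_eq_zero.mp hb.symm)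
    rw [Module.End.mul_apply, LinearMap.smul_apply, Module.End.mul_apply]
    exact hb'
  -- bracket [d k, d j] lands in the span of the P's
  have hbrDD : ∀ k j : Fin n, T.bL (V.d k) (V.d j)
      ∈ Submodule.span 𝔽 (Set.range T.P) := by
    intro k j
    rcases Submodule.mem_sup.mp (_hV.d_mem k) with ⟨a1, ha1, a3, ha3, haddk⟩
    rcases Submodule.mem_sup.mp (_hV.d_mem j) with ⟨b1, hb1, b3, hb3, haddj⟩
    have hexp : T.bL (V.d k) (V.d j)
        = T.bL a1 b1 + (T.bL a1 b3 + (T.bL a3 b1 + T.bL a3 b3)) := by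
      rw [← haddk, ← haddj]
      simp only [map_add, LinearMap.add_apply]
      abel
    rw [hexp, hdeep (-1) (-3) _ _ (by norm_num) ha1 hb3,
      hdeep (-3) (-1) _ _ (by norm_num) ha3 hb1,
      hdeep (-3) (-3) _ _ (by norm_num) ha3 hb3]
    have h11 := _hT.bL_deg (-1) (-1) a1 ha1 b1 hb1
    rw [show ((-1 : ℤ) + (-1)) = -2 by norm_num] at h11
    rw [← _hT.P_span]
    simpa using h11
  -- bracket [d k, P i] lands in the span of the d's
  have hbrDP : ∀ (k : Fin n) (i : SIdx r s), T.bL (V.d k) (T.P i)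
      ∈ Submodule.span 𝔽 (Set.range V.d) := by
    intro k i
    rcases Submodule.mem_sup.mp (_hV.d_mem k) with ⟨a1, ha1, a3, ha3, haddk⟩
    have hexp : T.bL (V.d k) (T.P i) = T.bL a1 (T.P i) + T.bL a3 (T.P i) := by
      rw [← haddk]
      simp only [map_add, LinearMap.add_apply]
    rw [hexp, hdeep (-3) (-2) _ _ (by norm_num) ha3 (_hT.P_mem i), add_zero]
    have h1 := _hT.bL_deg (-1) (-2) a1 ha1 (T.P i) (_hT.P_mem i)
    rw [show ((-1 : ℤ) + (-2)) = -3 by norm_num] at h1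
    rw [_hV.d_span]
    exact Submodule.mem_sup_right h1
  -- push spans through V.α
  have hmapP : ∀ z ∈ Submodule.span 𝔽 (Set.range T.P),
      V.α z ∈ Submodule.span 𝔽 (Set.range E) := by
    intro z hz
    have h := Submodule.mem_map_of_mem (f := V.α) hz
    rw [Submodule.map_span] at h
    have him : V.α '' Set.range T.P = Set.range E := by
      rw [← Set.range_comp]; rfl
    rwa [him] at h
  have hmapD : ∀ z ∈ Submodule.span 𝔽 (Set.range V.d),
      V.α z ∈ Submodule.span 𝔽 (Set.range Dd) := by
    intro z hz
    have h := Submodule.mem_map_of_mem (f := V.α) hz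
    rw [Submodule.map_span] at h
    have him : V.α '' Set.range V.d = Set.range Dd := by
      rw [← Set.range_comp]; rfl
    rwa [him] at h
  have hDD : ∀ k j : Fin n, ∃ g ∈ Submodule.span 𝔽 (Set.range E),
      ∀ m : MF, Dd k (Dd j m) = g m - Dd j (Dd k m) := by
    intro k j
    refine ⟨V.α (T.bL (V.d k) (V.d j)), hmapP _ (hbrDD k j), ?_⟩
    intro m
    have hb := _hV.α_bracket 1 1 (V.d k) (_hV.d_odd k) (V.d j) (_hV.d_odd j) m
    have hs : sgn 𝔽 ((1 : ZMod 2) * 1) = -1 := by rw [one_mul, L313.sgn_one']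
    rw [hs, neg_smul, one_smul, sub_neg_eq_add] at hb
    rw [hb]
    abel
  have hDP : ∀ (k : Fin n) (i : SIdx r s), ∃ g ∈ Submodule.span 𝔽 (Set.range Dd),
      ∃ cc : 𝔽, ∀ m : MF, Dd k (E i m) = g m + cc • E i (Dd k m) := by
    intro k i
    refine ⟨V.α (T.bL (V.d k) (T.P i)), hmapD _ (hbrDP k i),
      sgn 𝔽 ((1 : ZMod 2) * iparity i), ?_⟩
    intro m
    have hb := _hV.α_bracket 1 (iparity i) (V.d k) (_hV.d_odd k)
      (T.P i) (_hT.P_parity i) m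
    rw [hb]
    abel
  have hX0 : X m₀ = 0 := by
    rw [hXdef, hm₀def]
    rw [_hV.ιF_equiv x (V.v 0), _htriv]
    simp
  have hXD : ∀ (j : Fin n) (m : MF),
      X (Dd j m) = (∑ i, c i j • Dd i m) + ε • Dd j (X m) := by
    intro j m
    have hb := _hV.α_bracket πx 1 (x : AnnQ 𝔽 A) _hx (V.d j) (_hV.d_odd j) m
    rw [hc j] at hb
    simp only [map_sum, map_smul, LinearMap.sum_apply, LinearMap.smul_apply] at hb
    rw [← hεdef] at hb
    have hb' : (∑ i, c i j • Dd i m) = X (Dd j m) - ε • Dd j (X m) := hb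
    rw [hb']
    abel
  -- apply the expansion lemma over `univ`
  set S : 𝔽 := ∑ j ∈ Finset.univ,
    ε ^ ((Finset.univ : Finset (Fin n)).filter (· < j)).card * c j j with hSdef
  have hcardU : (Finset.univ : Finset (Fin n)).card = n := by
    rw [Finset.card_univ, Fintype.card_fin]
  have hC := L313.Cexp E Dd m₀ hPP hDD hDP X c ε hX0 hXD n Finset.univ
    (le_of_eq hcardU)
  -- identify `sP Dd univ m₀` with the basis vector
  have hBBtriv : ∀ I : Finset (Fin n),
      L313.sP Dd I m₀ = vermaBasisElt V ((0, ∅) : SKey r s) I 0 := by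
    intro I
    rw [← hBB, L313.BB, L313.opPow_trivial E]
    rfl
  rw [L313.CSet] at hC
  rw [hBBtriv Finset.univ] at hC
  -- the error span is contained in the span from `hrx`
  have hCU : Submodule.span 𝔽 {m | ∃ (K' : SKey r s) (I' : Finset (Fin n)),
        (keyLen K' + I'.card ≤ (Finset.univ : Finset (Fin n)).card ∧
          (keyLen K' + I'.card = (Finset.univ : Finset (Fin n)).card →
            ∃ w ∈ I', w ∉ (Finset.univ : Finset (Fin n)))) ∧ m = L313.BB E Dd m₀ K' I'}
      ≤ Submodule.span 𝔽
        {m | ∃ (K : SKey r s) (J : Finset (Fin n)) (h : Fin 1),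
          J ≠ Finset.univ ∧ m = vermaBasisElt V K J h} := by
    apply Submodule.span_le.mpr
    rintro z ⟨K', I', ⟨hle, hwit⟩, rfl⟩
    apply Submodule.subset_span
    refine ⟨K', I', 0, ?_, (hBB K' I').symm⟩
    intro hIU
    have hcard : I'.card = n := by rw [hIU]; exact hcardU
    have heq : keyLen K' + I'.card = (Finset.univ : Finset (Fin n)).card := by
      by_contra hne
      -- then mass < n so |I'| < n, contradicting hIU via cardinality
      have : keyLen K' + I'.card < n := by omega
      omega
    obtain ⟨w, _, hwU⟩ := hwit heq
    exact hwU (Finset.mem_univ w)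
  have hmem1 : X (vermaBasisElt V ((0, ∅) : SKey r s) Finset.univ 0)
      - S • vermaBasisElt V ((0, ∅) : SKey r s) Finset.univ 0 ∈
      Submodule.span 𝔽
        {m | ∃ (K : SKey r s) (J : Finset (Fin n)) (h : Fin 1),
          J ≠ Finset.univ ∧ m = vermaBasisElt V K J h} := hCU hC
  -- subtract from hrx
  have hsub : (rx - S) • vermaBasisElt V ((0, ∅) : SKey r s) Finset.univ 0 ∈
      Submodule.span 𝔽
        {m | ∃ (K : SKey r s) (J : Finset (Fin n)) (h : Fin 1),
          J ≠ Finset.univ ∧ m = vermaBasisElt V K J h} := by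
    have h := Submodule.sub_mem _ hmem1 hrx
    have heq : X (vermaBasisElt V ((0, ∅) : SKey r s) Finset.univ 0)
        - S • vermaBasisElt V ((0, ∅) : SKey r s) Finset.univ 0
        - (V.α (x : AnnQ 𝔽 A) (vermaBasisElt V ((0, ∅) : SKey r s) Finset.univ 0)
          - rx • vermaBasisElt V ((0, ∅) : SKey r s) Finset.univ 0)
        = (rx - S) • vermaBasisElt V ((0, ∅) : SKey r s) Finset.univ 0 := by
      rw [sub_smul, hXdef]
      abel
    rwa [heq] at h
  -- extract the coefficient using freeness
  set eqv := LinearEquiv.ofBijective (vermaStr V) _hV.free with heqv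
  set p₀ : SKey r s × Finset (Fin n) × Fin 1 :=
    (((0, ∅) : SKey r s), Finset.univ, 0) with hp₀
  have hstr : ∀ p : SKey r s × Finset (Fin n) × Fin 1,
      vermaStr V (Finsupp.single p 1) = vermaBasisElt V p.1 p.2.1 p.2.2 := by
    intro p
    rw [vermaStr, Finsupp.lsum_single, LinearMap.toSpanSingleton_apply_one]
  have hsymm : ∀ p : SKey r s × Finset (Fin n) × Fin 1,
      eqv.symm (vermaBasisElt V p.1 p.2.1 p.2.2) = Finsupp.single p 1 := by
    intro p
    rw [LinearEquiv.symm_apply_eq]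
    exact (hstr p).symm
  have hφU : ∀ z ∈ Submodule.span 𝔽
      {m | ∃ (K : SKey r s) (J : Finset (Fin n)) (h : Fin 1),
        J ≠ Finset.univ ∧ m = vermaBasisElt V K J h},
      eqv.symm z p₀ = 0 := by
    intro z hz
    induction hz using Submodule.span_induction with
    | mem w hw =>
      obtain ⟨K, J, h, hJ, rfl⟩ := hw
      have h0 : h = 0 := Subsingleton.elim h 0
      subst h0
      have hne2 : ((K, J, 0) : SKey r s × Finset (Fin n) × Fin 1) ≠ p₀ := by
        intro hEq
        exact hJ (congrArg (fun p : SKey r s × Finset (Fin n) × Fin 1 => p.2.1) hEq)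
      rw [hsymm (K, J, 0), Finsupp.single_apply, if_neg hne2]
    | zero => simp
    | add a b _ _ ha hb => rw [map_add, Finsupp.add_apply, ha, hb, add_zero]
    | smul t a _ ha => rw [map_smul, Finsupp.smul_apply, ha, smul_zero]
  have hφv : eqv.symm (vermaBasisElt V ((0, ∅) : SKey r s) Finset.univ 0) p₀ = 1 := by
    rw [hsymm p₀]
    exact Finsupp.single_eq_same
  have hrxS : rx = S := by
    have h := hφU _ hsub
    rw [map_smul, Finsupp.smul_apply, hφv] at h
    have h2 : rx - S = 0 := by simpa using h
    exact sub_eq_zero.mp h2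
  -- now evaluate S according to the parity of x
  have hz2 : ∀ z : ZMod 2, z = 0 ∨ z = 1 := by decide
  rcases hz2 πx with hπ | hπ
  · -- even case
    have hε1 : ε = 1 := by
      rw [hεdef, hπ, zero_mul, L313.sgn_zero']
    rw [hrxS, hSdef, hε1]
    simp [pureOddSupertrace]
  · -- odd case : all c i j vanish
    have hm₀g : m₀ ∈ V.gM (V.pv 0) := _hV.ιF_parity _ _ (_hV.v_parity 0)
    have hdm : ∀ i : Fin n, Dd i m₀ ∈ V.gM (1 + V.pv 0) := fun i =>
      _hV.α_parity 1 (V.pv 0) (V.d i) (_hV.d_odd i) m₀ hm₀g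
    have hc0 : ∀ i j, c i j = 0 := by
      intro i₀ j
      have hb := _hV.α_bracket πx 1 (x : AnnQ 𝔽 A) _hx (V.d j) (_hV.d_odd j) m₀
      rw [hc j] at hb
      simp only [map_sum, map_smul, LinearMap.sum_apply, LinearMap.smul_apply] at hb
      rw [show V.α (x : AnnQ 𝔽 A) m₀ = 0 from hX0] at hb
      rw [map_zero, smul_zero, sub_zero] at hb
      have hb' : (∑ i, c i j • Dd i m₀) = X (Dd j m₀) := hb
      have hy1 : (∑ i, c i j • Dd i m₀) ∈ V.gM (1 + V.pv 0) :=
        Submodule.sum_mem _ (fun i _ => Submodule.smul_mem _ _ (hdm i))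
      have hy2 : (∑ i, c i j • Dd i m₀) ∈ V.gM (V.pv 0) := by
        rw [hb']
        have h := _hV.α_parity πx (1 + V.pv 0) (x : AnnQ 𝔽 A) _hx _ (hdm j)
        have hpar : πx + (1 + V.pv 0) = V.pv 0 := by
          have h11 : (1 : ZMod 2) + 1 = 0 := by decide
          rw [hπ, ← add_assoc, h11, zero_add]
        rwa [hpar] at h
      have hne : V.pv 0 ≠ 1 + V.pv 0 := by
        intro h
        have h' : (0 : ZMod 2) + V.pv 0 = 1 + V.pv 0 := by rw [zero_add]; exact h
        exact zero_ne_one (add_right_cancel h')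
      have hdisj : Disjoint (V.gM (V.pv 0)) (V.gM (1 + V.pv 0)) :=
        (_hV.gM_internal.submodule_iSupIndep.pairwiseDisjoint) hne
      have hy0 : (∑ i, c i j • Dd i m₀) = 0 :=
        Submodule.disjoint_def.mp hdisj _ hy2 hy1
      -- transfer to the free module
      have hDi : ∀ i : Fin n, Dd i m₀
          = vermaStr V (Finsupp.single (((0, ∅) : SKey r s), ({i} : Finset (Fin n)), (0 : Fin 1)) 1) := by
        intro i
        rw [hstr]
        have : vermaBasisElt V ((0, ∅) : SKey r s) {i} 0 = L313.sP Dd {i} m₀ :=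
          (hBBtriv {i}).symm
        rw [this, L313.sP_singleton]
      have hsum0 : vermaStr V (∑ i, c i j •
          Finsupp.single (((0, ∅) : SKey r s), ({i} : Finset (Fin n)), (0 : Fin 1)) (1 : 𝔽)) = 0 := by
        rw [map_sum]
        simp only [map_smul]
        rw [← hy0]
        apply Finset.sum_congr rfl
        intro i _
        rw [hDi i]
      have hF0 : (∑ i, c i j •
          Finsupp.single (((0, ∅) : SKey r s), ({i} : Finset (Fin n)), (0 : Fin 1)) (1 : 𝔽)) = 0 := by
        apply _hV.free.1
        rw [hsum0, map_zero]
      have := congrArg (fun F : (SKey r s × Finset (Fin n) × Fin 1) →₀ 𝔽 =>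
        F (((0, ∅) : SKey r s), ({i₀} : Finset (Fin n)), (0 : Fin 1))) hF0
      simp only [Finsupp.finset_sum_apply, Finsupp.smul_apply, Finsupp.single_apply,
        Finsupp.coe_zero, Pi.zero_apply] at this
      rw [Finset.sum_eq_single i₀] at this
      · rw [if_pos rfl] at this
        simpa using this
      · intro b _ hbne
        rw [if_neg, smul_zero]
        intro hEq
        apply hbne
        have h2 := congrArg (fun p : SKey r s × Finset (Fin n) × Fin 1 => p.2.1) hEq
        simpa [Finset.singleton_inj] using h2
      · intro habs
        exact absurd (Finset.mem_univ i₀) habs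
    rw [hrxS, hSdef]
    simp [pureOddSupertrace, hc0]
end

section
/- The F[∂_1,…,∂_5]-module RE(5,10), defined as the submodule of the free F[∂]-module R̂E(5,10) (on even generators ∂_{x_1},…,∂_{x_5} and odd generators d_{jk}, j<k) generated by the elements a_{ij} = ∂_i ∂_{x_j} − ∂_j ∂_{x_i} (i,j ∈ {1,…,5}) and b_k = Σ_h ∂_h d_{hk} (k ∈ {1,…,5}), is presented as an F[∂]-module by generators a_{ij}, b_k subject exactly to the relations: (1) a_{ij} + a_{ji} = 0; (2) ∂_h a_{ij} + ∂_i a_{jh} + ∂_j a_{hi} = 0; (3) Σ_k ∂_k b_k = 0. That is, every F[∂]-linear relation among the elements a_{ij}, b_k in R̂E(5,10) is a consequence of (1), (2), (3). -/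
/-!
A relation `Σ c_ij • a_ij + Σ g_k • b_k = 0` splits into its `∂_{x_m}`- and `d_{pq}`-components:
`Σ_i (c_im - c_mi) ∂_i = 0` for every `m`, and `g_q ∂_p = g_p ∂_q`.  The second condition is
exactness of the Koszul complex of `(∂_1, …, ∂_5)` in degree one, so `g = q • ∂` and the
`b`-part is `q` times relation (3).  Modulo relation (1) the `a`-part has an antisymmetric
coefficient matrix `s` whose columns are syzygies of `(∂_1, …, ∂_5)`.  With the Euler operator
`E = Σ_h ∂_h · ∂/∂(∂_h)` and `t = (E + 2)⁻¹ s` (again an antisymmetric syzygy),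
`Σ_{h,i,j} ∂t_ij/∂∂_h • (∂_h a_ij + ∂_i a_jh + ∂_j a_hi) = Σ_{i,j} (E + 2) t_ij • a_ij`,
which writes the `a`-part through relations (2).  Both steps invert `E + r` with `r > 0`
on polynomials, which is where characteristic zero enters.
-/

open MvPolynomial

variable (𝔽 : Type) [Field 𝔽] [CharZero 𝔽] [IsAlgClosed 𝔽]

/-- The polynomial algebra `𝔽[∂₁,…,∂₅]`. -/
abbrev PD (𝔽 : Type) [Field 𝔽] := MvPolynomial (Fin 5) 𝔽

/-- Generators of the free module `R̂E(5,10)`: the `∂_{x_i}` and the `d_{jk}` with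
`j < k`. -/
abbrev HatGen := Sum (Fin 5) {p : Fin 5 × Fin 5 // p.1 < p.2}

/-- The free `𝔽[∂]`-module `R̂E(5,10)`. -/
abbrev HatRE (𝔽 : Type) [Field 𝔽] := HatGen →₀ PD 𝔽

/-- The element `d_{jk}` of `R̂E(5,10)`, for arbitrary `j, k` (`d_{jj} = 0`,
`d_{jk} = -d_{kj}` for `j > k`). -/
noncomputable def dElem (j k : Fin 5) : HatRE 𝔽 :=
  if h : j < k then Finsupp.single (Sum.inr ⟨(j, k), h⟩) 1
  else if h' : k < j then -Finsupp.single (Sum.inr ⟨(k, j), h'⟩) 1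
  else 0

/-- The element `a_{ij} = ∂_i ∂_{x_j} - ∂_j ∂_{x_i}`. -/
noncomputable def aElem (i j : Fin 5) : HatRE 𝔽 :=
  Finsupp.single (Sum.inl j) (X i) - Finsupp.single (Sum.inl i) (X j)

/-- The element `b_k = Σ_h ∂_h d_{hk}`. -/
noncomputable def bElem (k : Fin 5) : HatRE 𝔽 :=
  ∑ h : Fin 5, (X h : PD 𝔽) • dElem 𝔽 h k

/-- The free `𝔽[∂]`-module on the abstract generators `a_{ij}` (`inl (i,j)`) and `b_k`
(`inr k`). -/
abbrev FreeRE (𝔽 : Type) [Field 𝔽] := (Sum (Fin 5 × Fin 5) (Fin 5)) →₀ PD 𝔽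

/-- The canonical `𝔽[∂]`-linear map from the free module on the symbols `a_{ij}`, `b_k`
to `R̂E(5,10)`, whose image is `RE(5,10)`. -/
noncomputable def presMap : FreeRE 𝔽 →ₗ[PD 𝔽] HatRE 𝔽 :=
  Finsupp.lsum (PD 𝔽) fun g =>
    LinearMap.toSpanSingleton (PD 𝔽) (HatRE 𝔽)
      (Sum.elim (fun p => aElem 𝔽 p.1 p.2) (fun k => bElem 𝔽 k) g)

/-- Relation (1): `a_{ij} + a_{ji} = 0`. -/
noncomputable def rel1 (i j : Fin 5) : FreeRE 𝔽 :=
  Finsupp.single (Sum.inl (i, j)) 1 + Finsupp.single (Sum.inl (j, i)) 1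

/-- Relation (2): `∂_h a_{ij} + ∂_i a_{jh} + ∂_j a_{hi} = 0`. -/
noncomputable def rel2 (h i j : Fin 5) : FreeRE 𝔽 :=
  Finsupp.single (Sum.inl (i, j)) (X h) + Finsupp.single (Sum.inl (j, h)) (X i) +
    Finsupp.single (Sum.inl (h, i)) (X j)

/-- Relation (3): `Σ_k ∂_k b_k = 0`. -/
noncomputable def rel3 : FreeRE 𝔽 := ∑ k : Fin 5, Finsupp.single (Sum.inr k) (X k)


namespace MvPolynomial

section Euler

variable {σ R : Type*} [Fintype σ] [CommSemiring R]

noncomputable def euler : MvPolynomial σ R →ₗ[R] MvPolynomial σ R :=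
  ∑ i, LinearMap.mulLeft R (X i) ∘ₗ (pderiv i).toLinearMap

theorem euler_apply (p : MvPolynomial σ R) : euler p = ∑ i, X i * pderiv i p := by
  simp [euler]

theorem euler_monomial (d : σ →₀ ℕ) (a : R) :
    euler (monomial d a) = d.degree • monomial d a := by
  simp only [euler_apply, X_mul_pderiv_monomial, ← Finset.sum_smul, Finsupp.degree_eq_sum]

theorem sum_pderiv_mul_X_self (p : MvPolynomial σ R) :
    ∑ i, pderiv i (p * X i) = euler p + Fintype.card σ • p := by
  simp [euler_apply, Derivation.leibniz, Finset.sum_add_distrib, mul_comm, add_comm]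

theorem sum_pderiv_mul_X_eq (g : σ → MvPolynomial σ R) (k : σ) :
    ∑ h, pderiv h (g h * X k) = (∑ h, pderiv h (g h)) * X k + g k := by
  classical
  simp [Derivation.leibniz, Finset.sum_add_distrib, Finset.mul_sum, pderiv_X, Pi.single_apply,
    mul_comm, add_comm]

end Euler

section EulerInverse

variable {σ K : Type*} [Field K]

/-- The inverse of `euler + r • id` when `r ≠ 0`. -/
noncomputable def eulerShiftInv (r : ℕ) : MvPolynomial σ K →ₗ[K] MvPolynomial σ K :=
  (basisMonomials σ K).constr K fun d => ((d.degree + r : ℕ) : K)⁻¹ • monomial d 1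

theorem eulerShiftInv_monomial (r : ℕ) (d : σ →₀ ℕ) (a : K) :
    eulerShiftInv r (monomial d a) = monomial d (((d.degree + r : ℕ) : K)⁻¹ * a) := by
  have : monomial d a = a • basisMonomials σ K d := by simp [smul_monomial]
  rw [this, map_smul, eulerShiftInv, Module.Basis.constr_basis, smul_smul, smul_monomial,
    smul_eq_mul, mul_one, mul_comm]

theorem eulerShiftInv_mul_X (r : ℕ) (p : MvPolynomial σ K) (i : σ) :
    eulerShiftInv r (p * X i) = eulerShiftInv (r + 1) p * X i := by
  induction p using induction_on' with
  | monomial d a =>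
    simp only [X, monomial_mul, mul_one, eulerShiftInv_monomial, map_add, Finsupp.degree_single]
    push_cast
    ring_nf
  | add p q hp hq => rw [add_mul, map_add, hp, hq, map_add, add_mul]

variable [Fintype σ] [CharZero K]

theorem euler_eulerShiftInv {r : ℕ} (hr : r ≠ 0) (p : MvPolynomial σ K) :
    euler (eulerShiftInv r p) + r • eulerShiftInv r p = p := by
  induction p using induction_on' with
  | monomial d a =>
    have hne : ((d.degree + r : ℕ) : K) ≠ 0 := Nat.cast_ne_zero.2 (by omega)
    rw [eulerShiftInv_monomial, euler_monomial, ← add_smul, smul_monomial, nsmul_eq_mul]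
    congr 1
    field_simp
  | add p q hp hq =>
    rw [map_add, map_add, smul_add]
    conv_rhs => rw [← hp, ← hq]
    abel

theorem eulerShiftInv_euler {r : ℕ} (hr : r ≠ 0) (p : MvPolynomial σ K) :
    eulerShiftInv r (euler p + r • p) = p := by
  induction p using induction_on' with
  | monomial d a =>
    have hne : ((d.degree + r : ℕ) : K) ≠ 0 := Nat.cast_ne_zero.2 (by omega)
    rw [euler_monomial, ← add_smul, smul_monomial, nsmul_eq_mul, eulerShiftInv_monomial]
    congr 1
    field_simp
  | add p q hp hq =>
    rw [map_add euler, smul_add, add_add_add_comm, map_add, hp, hq]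

end EulerInverse

section Koszul

variable {σ K : Type*} [Fintype σ] [Field K] [CharZero K]

theorem exists_eq_mul_X_of_mul_X_comm (hσ : 1 < Fintype.card σ) {g : σ → MvPolynomial σ K}
    (hg : ∀ j k, g k * X j = g j * X k) : ∃ q, ∀ k, g k = q * X k := by
  obtain ⟨n, hn⟩ : ∃ n, Fintype.card σ = n + 2 := ⟨_, (Nat.sub_add_cancel hσ).symm⟩
  refine ⟨eulerShiftInv (n + 2) (∑ h, pderiv h (g h)), fun k => ?_⟩
  -- the divergence in `h` of `g k * X h = g h * X k`
  have key : euler (g k) + (n + 1) • g k = (∑ h, pderiv h (g h)) * X k := by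
    have h := sum_pderiv_mul_X_self (g k)
    simp only [hg _ k, sum_pderiv_mul_X_eq, hn] at h
    linear_combination -h
  calc g k = eulerShiftInv (n + 1) (euler (g k) + (n + 1) • g k) :=
        (eulerShiftInv_euler n.succ_ne_zero _).symm
    _ = eulerShiftInv (n + 2) (∑ h, pderiv h (g h)) * X k := by rw [key, eulerShiftInv_mul_X]

end Koszul

section Syzygy

variable {σ M : Type*} (R : Type*) [CommRing R] [AddCommGroup M] [Module (MvPolynomial σ R) M]

noncomputable def cyclicRel (e : σ → σ → M) (h i j : σ) : M :=
  (X h : MvPolynomial σ R) • e i j + (X i : MvPolynomial σ R) • e j h +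
    (X j : MvPolynomial σ R) • e h i

variable {R} [Fintype σ]

theorem sum_X_mul_pderiv_of_syzygy {t : σ → σ → MvPolynomial σ R} (ht : ∀ i j, t j i = -t i j)
    (hs : ∀ j, ∑ i, t i j * X i = 0) (j k : σ) : ∑ i, X i * pderiv k (t i j) = t j k := by
  classical
  have h := congrArg (pderiv k) (hs j)
  simp only [map_sum, Derivation.leibniz, pderiv_X, smul_eq_mul, Pi.single_apply, mul_ite, mul_one,
    mul_zero, Finset.sum_add_distrib, Finset.sum_ite_eq', Finset.mem_univ, if_true, map_zero] at h
  linear_combination h - ht k j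

theorem sum_pderiv_smul_cyclicRel {t : σ → σ → MvPolynomial σ R} (ht : ∀ i j, t j i = -t i j)
    (hs : ∀ j, ∑ i, t i j * X i = 0) (e : σ → σ → M) :
    ∑ h, ∑ i, ∑ j, pderiv h (t i j) • cyclicRel R e h i j =
      ∑ i, ∑ j, (euler (t i j) + 2 • t i j) • e i j := by
  have hA : ∑ h, ∑ i, ∑ j, (pderiv h (t i j) * X h) • e i j = ∑ i, ∑ j, euler (t i j) • e i j := by
    rw [Finset.sum_comm]
    refine Finset.sum_congr rfl fun i _ => ?_
    rw [Finset.sum_comm]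
    simp_rw [euler_apply, Finset.sum_smul, mul_comm]
  have hB : ∑ h, ∑ i, ∑ j, (pderiv h (t i j) * X i) • e j h = ∑ j, ∑ h, t j h • e j h := by
    rw [Finset.sum_congr rfl fun h _ => Finset.sum_comm, Finset.sum_comm]
    simp_rw [← Finset.sum_smul, mul_comm, sum_X_mul_pderiv_of_syzygy ht hs]
  have hC : ∑ h, ∑ i, ∑ j, (pderiv h (t i j) * X j) • e h i = ∑ h, ∑ i, t h i • e h i := by
    refine Finset.sum_congr rfl fun h _ => Finset.sum_congr rfl fun i _ => ?_
    rw [← Finset.sum_smul]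
    congr 1
    calc ∑ j, pderiv h (t i j) * X j = ∑ j, -(X j * pderiv h (t j i)) :=
          Finset.sum_congr rfl fun j _ => by rw [ht j i, map_neg]; ring
      _ = t h i := by rw [Finset.sum_neg_distrib, sum_X_mul_pderiv_of_syzygy ht hs, ht i h]
  simp only [cyclicRel, smul_add, smul_smul, Finset.sum_add_distrib, hA, hB, hC, add_smul,
    two_smul, add_assoc]

end Syzygy

section Span

variable {σ K M : Type*} [Fintype σ] [Field K] [CharZero K] [AddCommGroup M]
  [Module (MvPolynomial σ K) M]

theorem sum_smul_mem_span_cyclicRel {s : σ → σ → MvPolynomial σ K}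
    (hs_anti : ∀ i j, s j i = -s i j) (hs : ∀ j, ∑ i, s i j * X i = 0) (e : σ → σ → M) :
    ∑ i, ∑ j, s i j • e i j ∈ Submodule.span (MvPolynomial σ K)
      (Set.range fun x : σ × σ × σ => cyclicRel K e x.1 x.2.1 x.2.2) := by
  set t := fun i j => eulerShiftInv 2 (s i j)
  have ht_anti : ∀ i j, t j i = -t i j := fun i j => by simp only [t, hs_anti i j, map_neg]
  have ht : ∀ j, ∑ i, t i j * X i = 0 := fun j => by
    simpa [eulerShiftInv_mul_X] using congrArg (eulerShiftInv 1) (hs j)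
  have hst : ∀ i j, s i j = euler (t i j) + 2 • t i j :=
    fun i j => (euler_eulerShiftInv two_ne_zero _).symm
  simp_rw [hst, ← sum_pderiv_smul_cyclicRel ht_anti ht]
  exact Submodule.sum_mem _ fun h _ => Submodule.sum_mem _ fun i _ =>
    Submodule.sum_mem _ fun j _ => Submodule.smul_mem _ _ (Submodule.subset_span ⟨(h, i, j), rfl⟩)

theorem sum_smul_mem_span_of_syzygy {c : σ → σ → MvPolynomial σ K}
    (hc : ∀ j, ∑ i, (c i j - c j i) * X i = 0) (e : σ → σ → M) :
    ∑ i, ∑ j, c i j • e i j ∈ Submodule.span (MvPolynomial σ K)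
      ((Set.range fun p : σ × σ => e p.1 p.2 + e p.2 p.1) ∪
        Set.range fun x : σ × σ × σ => cyclicRel K e x.1 x.2.1 x.2.2) := by
  set u := fun i j => (C 2⁻¹ : MvPolynomial σ K) * c i j
  have hhalf : (C 2⁻¹ : MvPolynomial σ K) + C 2⁻¹ = 1 := by rw [← C_add, ← C_1]; norm_num
  -- `c = (u - uᵀ) + u + uᵀ`, and `u - uᵀ` is an antisymmetric syzygy matrix
  have key : ∑ i, ∑ j, c i j • e i j =
      ∑ i, ∑ j, (u i j - u j i) • e i j + ∑ i, ∑ j, u i j • (e i j + e j i) := by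
    have hswap : ∑ i, ∑ j, u i j • e j i = ∑ i, ∑ j, u j i • e i j := Finset.sum_comm
    have hdouble :
        ∑ i, ∑ j, c i j • e i j = ∑ i, ∑ j, u i j • e i j + ∑ i, ∑ j, u i j • e i j := by
      simp only [← Finset.sum_add_distrib, ← add_smul, u, ← add_mul, hhalf, one_mul]
    simp only [hdouble, sub_smul, smul_add, Finset.sum_add_distrib, Finset.sum_sub_distrib, hswap]
    abel
  rw [key]
  refine add_mem (Submodule.span_mono Set.subset_union_right ?_)
    (Submodule.sum_mem _ fun i _ => Submodule.sum_mem _ fun j _ =>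
      Submodule.smul_mem _ _ (Submodule.subset_span (Or.inl ⟨(i, j), rfl⟩)))
  refine sum_smul_mem_span_cyclicRel (fun i j => by ring) (fun j => ?_) e
  simp only [u, ← mul_sub, mul_assoc, ← Finset.mul_sum, hc, mul_zero]

end Span

end MvPolynomial

section RE510

variable (K : Type) [Field K]

theorem dElem_apply_inr (h k p q : Fin 5) (hpq : p < q) :
    dElem K h k (Sum.inr ⟨(p, q), hpq⟩) =
      if h = p ∧ k = q then 1 else if h = q ∧ k = p then -1 else 0 := by
  unfold dElem
  split_ifs <;> simp_all [Finsupp.single_apply] <;> omega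

theorem dElem_apply_inl (h k m : Fin 5) : dElem K h k (Sum.inl m) = 0 := by
  unfold dElem
  split_ifs <;> simp

theorem aElem_apply_inl (i j m : Fin 5) :
    aElem K i j (Sum.inl m) = (if j = m then X i else 0) - if i = m then X j else 0 := by
  simp [aElem, Finsupp.single_apply]

theorem aElem_apply_inr (i j : Fin 5) (x : {p : Fin 5 × Fin 5 // p.1 < p.2}) :
    aElem K i j (Sum.inr x) = 0 := by
  simp [aElem]

theorem bElem_apply_inl (k m : Fin 5) : bElem K k (Sum.inl m) = 0 := by
  simp [bElem, dElem_apply_inl]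

theorem bElem_apply_inr (k p q : Fin 5) (hpq : p < q) :
    bElem K k (Sum.inr ⟨(p, q), hpq⟩) = (if k = q then X p else 0) - if k = p then X q else 0 := by
  have hpq' := hpq.ne
  by_cases hq : k = q <;> by_cases hp : k = p <;> simp_all [bElem, dElem_apply_inr]

theorem presMap_single (x : Sum (Fin 5 × Fin 5) (Fin 5)) (r : PD K) :
    presMap K (Finsupp.single x r) = r • Sum.elim (fun p => aElem K p.1 p.2) (bElem K) x := by
  simp [presMap]

theorem presMap_apply (f : FreeRE K) :
    presMap K f = ∑ i, ∑ j, f (Sum.inl (i, j)) • aElem K i j + ∑ k, f (Sum.inr k) • bElem K k := by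
  rw [presMap, Finsupp.lsum_apply, Finsupp.sum_fintype _ _ (by simp), Fintype.sum_sum_type,
    Fintype.sum_prod_type]
  simp

theorem presMap_rel1 (i j : Fin 5) : presMap K (rel1 K i j) = 0 := by
  simp only [rel1, map_add, presMap_single, Sum.elim_inl, one_smul, aElem]
  abel

theorem presMap_rel2 (h i j : Fin 5) : presMap K (rel2 K h i j) = 0 := by
  simp only [rel2, map_add, presMap_single, Sum.elim_inl, aElem, smul_sub, Finsupp.smul_single,
    smul_eq_mul]
  rw [mul_comm (X i) (X h), mul_comm (X j) (X h), mul_comm (X j) (X i)]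
  abel

theorem presMap_rel3 : presMap K (rel3 K) = 0 := by
  refine Finsupp.ext fun x => ?_
  rcases x with m | ⟨⟨p, q⟩, hpq⟩
  · simp [rel3, presMap_single, bElem_apply_inl]
  · simp [rel3, presMap_single, bElem_apply_inr, mul_sub, Finset.sum_sub_distrib, mul_comm]

theorem sum_sub_mul_X_eq_zero_of_presMap_eq_zero {f : FreeRE K} (hf : presMap K f = 0)
    (m : Fin 5) :
    ∑ i, (f (Sum.inl (i, m)) - f (Sum.inl (m, i))) * X i = 0 := by
  have h := congrArg (· (Sum.inl m)) (presMap_apply K f)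
  simp [hf, aElem_apply_inl, bElem_apply_inl, mul_sub, Finset.sum_sub_distrib] at h
  simpa [sub_mul, Finset.sum_sub_distrib] using h.symm

theorem mul_X_comm_of_presMap_eq_zero {f : FreeRE K} (hf : presMap K f = 0) (j k : Fin 5) :
    f (Sum.inr k) * X j = f (Sum.inr j) * X k := by
  have key : ∀ p q, p < q → f (Sum.inr q) * X p = f (Sum.inr p) * X q := fun p q hpq => by
    have h := congrArg (· (Sum.inr ⟨(p, q), hpq⟩)) (presMap_apply K f)
    simpa [hf, aElem_apply_inr, bElem_apply_inr, mul_sub, sub_eq_zero] using h.symm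
  rcases lt_trichotomy j k with hjk | rfl | hkj
  exacts [key j k hjk, rfl, (key k j hkj).symm]

theorem freeRE_eq_sum (f : FreeRE K) :
    f = ∑ i, ∑ j, f (Sum.inl (i, j)) • Finsupp.single (Sum.inl (i, j)) 1 +
      ∑ k, f (Sum.inr k) • Finsupp.single (Sum.inr k) 1 := by
  simp only [Finsupp.smul_single_one]
  conv_lhs => rw [← Finsupp.univ_sum_single f, Fintype.sum_sum_type, Fintype.sum_prod_type]

theorem rel2_eq_cyclicRel (h i j : Fin 5) :
    rel2 K h i j = cyclicRel K (fun i j => Finsupp.single (Sum.inl (i, j)) 1) h i j := by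
  simp [rel2, cyclicRel]

end RE510

/-- **Proposition 6.4.**  Every `𝔽[∂]`-linear relation among the elements `a_{ij}`, `b_k`
of `R̂E(5,10)` is a consequence of the relations (1), (2), (3): the kernel of the
canonical map from the free module on the symbols `a_{ij}`, `b_k` is exactly the
submodule spanned by them. -/
theorem re510_presentation :
    LinearMap.ker (presMap 𝔽) =
      Submodule.span (PD 𝔽)
        ((Set.range fun p : Fin 5 × Fin 5 => rel1 𝔽 p.1 p.2) ∪
          (Set.range fun t : Fin 5 × Fin 5 × Fin 5 => rel2 𝔽 t.1 t.2.1 t.2.2) ∪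
          {rel3 𝔽}) := by
  refine le_antisymm (fun f hf => ?_) (Submodule.span_le.2 ?_)
  · rw [LinearMap.mem_ker] at hf
    obtain ⟨q, hq⟩ := exists_eq_mul_X_of_mul_X_comm (by simp) (mul_X_comm_of_presMap_eq_zero 𝔽 hf)
    have hb : ∑ k, f (Sum.inr k) • Finsupp.single (Sum.inr k) 1 = q • rel3 𝔽 := by
      simp [rel3, Finset.smul_sum, hq]
    rw [freeRE_eq_sum 𝔽 f, hb]
    refine add_mem (Submodule.span_mono ?_ (sum_smul_mem_span_of_syzygy
      (sum_sub_mul_X_eq_zero_of_presMap_eq_zero 𝔽 hf) _))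
      (Submodule.smul_mem _ _ (Submodule.subset_span (Or.inr rfl)))
    simp only [← rel2_eq_cyclicRel]
    exact Set.subset_union_left
  · rintro _ ((⟨p, rfl⟩ | ⟨t, rfl⟩) | rfl)
    exacts [presMap_rel1 𝔽 _ _, presMap_rel2 𝔽 _ _ _, presMap_rel3 𝔽]
end

section
/- For g(RE(5,10)) with its induced ℤ-gradation and every integer k ≥ 0: dim g(RE(5,10))_{2k−4} ≤ k(k+1)(k+2)(k+4)/6 and dim g(RE(5,10))_{2k−3} ≤ k(k+2)(k+3)(k+4)/6. -/
/-!
# Statement 17 (Proposition 6.9: dimension bounds for `g(RE(5,10))`)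

The annihilation algebra `g(RE(5,10))` is spanned by the elements `a_{ij} y^M` and
`b_k y^M` (`M ∈ ℤ₊⁵`), subject to the relations
(i) `a_{ij} y^M + a_{ji} y^M = 0`,
(ii) `a_{ij} (∂_{y_h} y^M) + a_{jh} (∂_{y_i} y^M) + a_{hi} (∂_{y_j} y^M) = 0`,
(iii) `Σ_k b_k (∂_{y_k} y^M) = 0`,
and is ℤ-graded by `deg (a_{ij} y^M) = 2|M| - 4`, `deg (b_k y^M) = 2|M| - 3`.
For every `k ≥ 0`:
`dim g(RE(5,10))_{2k-4} ≤ k(k+1)(k+2)(k+4)/6` and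
`dim g(RE(5,10))_{2k-3} ≤ k(k+2)(k+3)(k+4)/6`.
-/

variable (𝔽 : Type) [Field 𝔽] [CharZero 𝔽] [IsAlgClosed 𝔽]

/-- Spanning symbols of `g(RE(5,10))`: `inl (i,j)` is `a_{ij} y^M`, `inr k` is
`b_k y^M`. -/
abbrev AnnSym := Sum (Fin 5 × Fin 5) (Fin 5) × (Fin 5 →₀ ℕ)

/-- The free vector space on the spanning symbols. -/
abbrev AnnFree (𝔽 : Type) [Field 𝔽] := AnnSym →₀ 𝔽

/-- Relation (i): `a_{ij} y^M + a_{ji} y^M = 0`. -/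
noncomputable def relSkew (i j : Fin 5) (M : Fin 5 →₀ ℕ) : AnnFree 𝔽 :=
  Finsupp.single (Sum.inl (i, j), M) 1 + Finsupp.single (Sum.inl (j, i), M) 1

/-- Relation (ii): `a_{ij} ∂_{y_h} y^M + a_{jh} ∂_{y_i} y^M + a_{hi} ∂_{y_j} y^M = 0`. -/
noncomputable def relCyc (h i j : Fin 5) (M : Fin 5 →₀ ℕ) : AnnFree 𝔽 :=
  (M h : 𝔽) • Finsupp.single (Sum.inl (i, j), M - Finsupp.single h 1) 1 +
    (M i : 𝔽) • Finsupp.single (Sum.inl (j, h), M - Finsupp.single i 1) 1 +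
    (M j : 𝔽) • Finsupp.single (Sum.inl (h, i), M - Finsupp.single j 1) 1

/-- Relation (iii): `Σ_k b_k ∂_{y_k} y^M = 0`. -/
noncomputable def relDiv (M : Fin 5 →₀ ℕ) : AnnFree 𝔽 :=
  ∑ k : Fin 5, (M k : 𝔽) • Finsupp.single (Sum.inr k, M - Finsupp.single k 1) 1

/-- The submodule of relations. -/
noncomputable def annRels : Submodule 𝔽 (AnnFree 𝔽) :=
  Submodule.span 𝔽
    ((Set.range fun x : (Fin 5 × Fin 5) × (Fin 5 →₀ ℕ) => relSkew 𝔽 x.1.1 x.1.2 x.2) ∪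
      (Set.range fun x : (Fin 5 × Fin 5 × Fin 5) × (Fin 5 →₀ ℕ) =>
        relCyc 𝔽 x.1.1 x.1.2.1 x.1.2.2 x.2) ∪
      (Set.range fun M : Fin 5 →₀ ℕ => relDiv 𝔽 M))

/-- The annihilation algebra `g(RE(5,10))` (as a graded vector space). -/
abbrev AnnRE (𝔽 : Type) [Field 𝔽] [CharZero 𝔽] [IsAlgClosed 𝔽] :=
  AnnFree 𝔽 ⧸ annRels 𝔽

/-- The homogeneous component `g(RE(5,10))_{2k-4}`: the span of the classes of the
`a_{ij} y^M` with `|M| = k`. -/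
noncomputable def annEvenPiece (k : ℕ) : Submodule 𝔽 (AnnRE 𝔽) :=
  Submodule.span 𝔽
    {x | ∃ (i j : Fin 5) (M : Fin 5 →₀ ℕ), (M.sum fun _ n => n) = k ∧
      x = Submodule.Quotient.mk (Finsupp.single (Sum.inl (i, j), M) 1)}

/-- The homogeneous component `g(RE(5,10))_{2k-3}`: the span of the classes of the
`b_i y^M` with `|M| = k`. -/
noncomputable def annOddPiece (k : ℕ) : Submodule 𝔽 (AnnRE 𝔽) :=
  Submodule.span 𝔽
    {x | ∃ (i : Fin 5) (M : Fin 5 →₀ ℕ), (M.sum fun _ n => n) = k ∧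
      x = Submodule.Quotient.mk (Finsupp.single (Sum.inr i, M) 1)}

/-!
Write `a_{ij} p` and `b_k p` for the classes of `∑_M p_M a_{ij} y^M` and `∑_M p_M b_k y^M`,
and view families `F = (F_l)` of polynomials as vector fields.

Odd part: `g_{2k-3}` is the image of the `5·C(k+4,4)`-dimensional space of fields of degree `k`
under `F ↦ ∑_k b_k F_k`, whose kernel contains, by relation (iii), the gradients of the
polynomials of degree `k+1`; by Euler's identity these form a space of dimension `C(k+5,4)`.

Even part: summing relation (ii) for `y_h q` over `h`, Euler's identity and relation (i) give
`(k+3) a_{ij} q = ∑_h (a_{hj} y_h ∂_i q - a_{hi} y_h ∂_j q)` for `q` homogeneous of degree `k`.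
So `g_{2k-4}` lies in the image of the divergence-free fields of degree `k-1`, and since the
divergence maps the fields of degree `k-1` onto the polynomials of degree `k-2`, these form a
space of dimension `5·C(k+3,4) - C(k+2,4)`.
-/

open Module MvPolynomial

theorem Submodule.finrank_map_add_finrank_inf_ker {K V V' : Type*} [DivisionRing K]
    [AddCommGroup V] [Module K V] [AddCommGroup V'] [Module K V'] (f : V →ₗ[K] V')
    (W : Submodule K V) [FiniteDimensional K W] :
    finrank K (W.map f) + finrank K ↥(W ⊓ LinearMap.ker f) = finrank K W := by
  have hker : (LinearMap.ker (f.domRestrict W)).map W.subtype = W ⊓ LinearMap.ker f := by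
    rw [LinearMap.ker_domRestrict, Submodule.map_comap_subtype]
  rw [← LinearMap.range_domRestrict, ← hker,
    Submodule.finrank_map_subtype_eq, LinearMap.finrank_range_add_finrank_ker]

theorem twenty_four_mul_choose_four (n : ℕ) :
    24 * (n + 3).choose 4 = n * (n + 1) * (n + 2) * (n + 3) := by
  rw [show 24 = Nat.factorial 4 from rfl, ← Nat.descFactorial_eq_factorial_mul_choose]
  simp only [Nat.descFactorial_succ, add_tsub_cancel_right, Nat.reduceSubDiff,
    Nat.add_one_sub_one, tsub_zero, Nat.descFactorial_zero, mul_one]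
  ring

theorem card_fin_five_add_sub_one_choose (d : ℕ) :
    (Fintype.card (Fin 5) + d - 1).choose d = (d + 4).choose 4 := by
  rw [Fintype.card_fin, show 5 + d - 1 = d + 4 by omega, Nat.choose_symm_add]

theorem le_of_add_choose_four_pred_le (d X : ℕ) (h : X + (d + 3).choose 4 ≤ 5 * (d + 4).choose 4) :
    X ≤ (d + 1) * (d + 2) * (d + 3) * (d + 5) / 6 := by
  have h1 := twenty_four_mul_choose_four d
  have h2 := twenty_four_mul_choose_four (d + 1)
  rw [Nat.le_div_iff_mul_le (by norm_num)]
  nlinarith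

theorem le_of_add_choose_four_succ_le (k X : ℕ) (h : X + (k + 5).choose 4 ≤ 5 * (k + 4).choose 4) :
    X ≤ k * (k + 2) * (k + 3) * (k + 4) / 6 := by
  have h1 := twenty_four_mul_choose_four (k + 1)
  have h2 := twenty_four_mul_choose_four (k + 2)
  rw [Nat.le_div_iff_mul_le (by norm_num)]
  nlinarith

namespace MvPolynomial

variable {σ K : Type*}

theorem finrank_homogeneousSubmodule [Field K] [Fintype σ] (n : ℕ) :
    finrank K (homogeneousSubmodule σ K n) = (Fintype.card σ + n - 1).choose n := by
  classical
  have hs : {d : σ →₀ ℕ | d.degree = n} = ↑((Finset.univ : Finset σ).finsuppAntidiag n) := by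
    ext d
    simp [Finsupp.degree_eq_sum]
  rw [homogeneousSubmodule_eq_finsupp_supported, hs,
    (AddMonoidAlgebra.supportedEquivFinsupp _).finrank_eq]
  simp only [finrank_finsupp_self, Finset.coe_sort_coe, Fintype.card_coe,
    Finset.card_finsuppAntidiag_nat_eq_choose, Finset.card_univ]

theorem pderiv_pderiv_comm [CommRing K] (i j : σ) (p : MvPolynomial σ K) :
    pderiv i (pderiv j p) = pderiv j (pderiv i p) := by
  suffices h : ⁅pderiv i, pderiv j⁆ = (0 : Derivation K (MvPolynomial σ K) (MvPolynomial σ K)) by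
    have := congr($h p)
    rwa [Derivation.commutator_apply, Derivation.zero_apply, sub_eq_zero] at this
  refine derivation_ext fun k => ?_
  classical
  simp [Derivation.commutator_apply, Pi.single_apply, apply_ite]

theorem monomial_eq_smul_basisMonomials [CommSemiring K] (M : σ →₀ ℕ) (c : K) :
    monomial M c = c • basisMonomials σ K M := by
  simp [coe_basisMonomials, smul_monomial]

variable (σ K) in
noncomputable def homogeneousFields [CommSemiring K] (d : ℕ) : Submodule K (σ → MvPolynomial σ K) :=
  Submodule.pi Set.univ fun _ => homogeneousSubmodule σ K d

theorem homogeneousFields_eq_range [CommSemiring K] (d : ℕ) :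
    homogeneousFields σ K d =
      LinearMap.range ((homogeneousSubmodule σ K d).subtype.compLeft σ) := by
  rw [LinearMap.range_compLeft, Submodule.range_subtype, homogeneousFields]

instance [Field K] [Finite σ] (d : ℕ) : FiniteDimensional K (homogeneousFields σ K d) := by
  have := Module.Finite.iff_fg.2 (homogeneousSubmodule_fg σ K d)
  rw [homogeneousFields_eq_range]
  infer_instance

theorem finrank_homogeneousFields [Field K] [Fintype σ] (d : ℕ) :
    finrank K (homogeneousFields σ K d) =
      Fintype.card σ * (Fintype.card σ + d - 1).choose d := by
  have := Module.Finite.iff_fg.2 (homogeneousSubmodule_fg σ K d)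
  rw [homogeneousFields_eq_range, LinearMap.finrank_range_of_inj, finrank_pi_fintype,
    finrank_homogeneousSubmodule, Finset.sum_const, Finset.card_univ, smul_eq_mul]
  intro F G h
  ext i : 1
  exact Subtype.ext (congr_fun h i)

variable [DecidableEq σ]

theorem single_mem_homogeneousFields [CommSemiring K] {d : ℕ}
    {p : MvPolynomial σ K} (hp : p.IsHomogeneous d) (i : σ) :
    Pi.single i p ∈ homogeneousFields σ K d := by
  intro l _
  rcases eq_or_ne l i with rfl | hl
  · simp [hp]
  · simp [Pi.single_eq_of_ne hl]

noncomputable def skewGradient [CommRing K] (i j : σ) (p : MvPolynomial σ K) :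
    σ → MvPolynomial σ K :=
  Pi.single j (pderiv i p) - Pi.single i (pderiv j p)

theorem skewGradient_mem_homogeneousFields [CommRing K] {n : ℕ} {p : MvPolynomial σ K}
    (hp : p.IsHomogeneous n) (i j : σ) :
    skewGradient i j p ∈ homogeneousFields σ K (n - 1) :=
  sub_mem (single_mem_homogeneousFields hp.pderiv j) (single_mem_homogeneousFields hp.pderiv i)

section Operators

variable [Fintype σ]

variable (σ K) in
noncomputable def divergence [CommSemiring K] : (σ → MvPolynomial σ K) →ₗ[K] MvPolynomial σ K :=
  LinearMap.lsum K _ ℕ fun i => (pderiv i).toLinearMap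

variable (σ K) in
noncomputable def eulerContract [CommSemiring K] :
    (σ → MvPolynomial σ K) →ₗ[K] MvPolynomial σ K :=
  LinearMap.lsum K _ ℕ fun i => LinearMap.mulLeft K (X i)

theorem divergence_apply [CommSemiring K] (F : σ → MvPolynomial σ K) :
    divergence σ K F = ∑ i, pderiv i (F i) := by
  simp [divergence]

theorem eulerContract_apply [CommSemiring K] (F : σ → MvPolynomial σ K) :
    eulerContract σ K F = ∑ i, X i * F i := by
  simp [eulerContract]

theorem divergence_X_mul [CommSemiring K] {n : ℕ} {p : MvPolynomial σ K}
    (hp : p.IsHomogeneous n) :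
    divergence σ K (fun i => X i * p) = (Fintype.card σ + n) • p := by
  simp [divergence_apply, Finset.sum_add_distrib, hp.sum_X_mul_pderiv, add_smul, add_comm]

theorem homogeneousSubmodule_le_map_divergence [Field K] [CharZero K] [Nonempty σ] (e : ℕ) :
    homogeneousSubmodule σ K e ≤ (homogeneousFields σ K (e + 1)).map (divergence σ K) := by
  intro p hp
  have hne : ((Fintype.card σ + e : ℕ) : K) ≠ 0 :=
    Nat.cast_ne_zero.2 (Nat.add_pos_left Fintype.card_pos e).ne'
  refine ⟨((Fintype.card σ + e : ℕ) : K)⁻¹ • fun i => X i * p,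
    Submodule.smul_mem _ _ fun i _ => ?_, ?_⟩
  · simpa [add_comm] using (isHomogeneous_X K i).mul hp
  · rw [map_smul, divergence_X_mul hp, ← Nat.cast_smul_eq_nsmul K, inv_smul_smul₀ hne]

theorem homogeneousSubmodule_le_map_eulerContract [Field K] [CharZero K] {V : Type*}
    [AddCommGroup V] [Module K V] (f : (σ → MvPolynomial σ K) →ₗ[K] V)
    (hf : ∀ p, f (fun i => pderiv i p) = 0) (k : ℕ) :
    homogeneousSubmodule σ K (k + 1) ≤
      (homogeneousFields σ K k ⊓ LinearMap.ker f).map (eulerContract σ K) := by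
  intro p hp
  refine ⟨((k + 1 : ℕ) : K)⁻¹ • fun i => pderiv i p,
    Submodule.smul_mem _ _ ⟨fun i _ => hp.pderiv, hf p⟩, ?_⟩
  rw [map_smul, eulerContract_apply, hp.sum_X_mul_pderiv, ← Nat.cast_smul_eq_nsmul K,
    inv_smul_smul₀ (Nat.cast_ne_zero.2 k.succ_ne_zero)]

theorem sum_map_pderiv_X_mul [CommSemiring K] {V : Type*} [AddCommMonoid V] [Module K V]
    (f : σ → MvPolynomial σ K →ₗ[K] V) (r : σ) (q : MvPolynomial σ K) :
    ∑ h, f h (pderiv r (X h * q)) = f r q + ∑ h, f h (X h * pderiv r q) := by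
  simp only [pderiv_mul, pderiv_X, map_add, Finset.sum_add_distrib]
  rw [Fintype.sum_eq_single r fun h hh => by simp [Pi.single_eq_of_ne hh]]
  simp

theorem divergence_single [CommSemiring K] (i : σ) (p : MvPolynomial σ K) :
    divergence σ K (Pi.single i p) = pderiv i p :=
  LinearMap.lsum_piSingle ..

theorem divergence_skewGradient [CommRing K] (i j : σ) (p : MvPolynomial σ K) :
    divergence σ K (skewGradient i j p) = 0 := by
  rw [skewGradient, map_sub, divergence_single, divergence_single, pderiv_pderiv_comm, sub_self]

end Operators

end MvPolynomial

/-- `p ↦ a_{ij} p`. -/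
noncomputable def aPoly (i j : Fin 5) : MvPolynomial (Fin 5) 𝔽 →ₗ[𝔽] AnnRE 𝔽 :=
  (basisMonomials (Fin 5) 𝔽).constr 𝔽 fun M =>
    Submodule.Quotient.mk (Finsupp.single (Sum.inl (i, j), M) 1)

noncomputable def bPoly (k : Fin 5) : MvPolynomial (Fin 5) 𝔽 →ₗ[𝔽] AnnRE 𝔽 :=
  (basisMonomials (Fin 5) 𝔽).constr 𝔽 fun M =>
    Submodule.Quotient.mk (Finsupp.single (Sum.inr k, M) 1)

theorem aPoly_monomial (i j : Fin 5) (M : Fin 5 →₀ ℕ) (c : 𝔽) :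
    aPoly 𝔽 i j (monomial M c) =
      c • Submodule.Quotient.mk (Finsupp.single (Sum.inl (i, j), M) 1) := by
  rw [monomial_eq_smul_basisMonomials, map_smul, aPoly, Basis.constr_basis]

theorem bPoly_monomial (k : Fin 5) (M : Fin 5 →₀ ℕ) (c : 𝔽) :
    bPoly 𝔽 k (monomial M c) = c • Submodule.Quotient.mk (Finsupp.single (Sum.inr k, M) 1) := by
  rw [monomial_eq_smul_basisMonomials, map_smul, bPoly, Basis.constr_basis]

theorem aPoly_swap (i j : Fin 5) : aPoly 𝔽 j i = -aPoly 𝔽 i j := by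
  refine (basisMonomials (Fin 5) 𝔽).ext fun M => ?_
  have : (annRels 𝔽).mkQ (relSkew 𝔽 i j M) = 0 :=
    (Submodule.Quotient.mk_eq_zero _).2 (Submodule.subset_span (.inl (.inl ⟨((i, j), M), rfl⟩)))
  rw [relSkew, map_add] at this
  simpa [coe_basisMonomials, aPoly_monomial] using eq_neg_of_add_eq_zero_right this

theorem aPoly_cyclic (h i j : Fin 5) (p : MvPolynomial (Fin 5) 𝔽) :
    aPoly 𝔽 i j (pderiv h p) + aPoly 𝔽 j h (pderiv i p) + aPoly 𝔽 h i (pderiv j p) = 0 := by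
  suffices aPoly 𝔽 i j ∘ₗ (pderiv h).toLinearMap + aPoly 𝔽 j h ∘ₗ (pderiv i).toLinearMap +
      aPoly 𝔽 h i ∘ₗ (pderiv j).toLinearMap = 0 from congr($this p)
  refine (basisMonomials (Fin 5) 𝔽).ext fun M => ?_
  have : (annRels 𝔽).mkQ (relCyc 𝔽 h i j M) = 0 :=
    (Submodule.Quotient.mk_eq_zero _).2 (Submodule.subset_span (.inl (.inr ⟨((h, i, j), M), rfl⟩)))
  simp only [relCyc, map_add, map_smul] at this
  simpa [coe_basisMonomials, aPoly_monomial] using this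

theorem sum_bPoly_pderiv (p : MvPolynomial (Fin 5) 𝔽) : ∑ k, bPoly 𝔽 k (pderiv k p) = 0 := by
  suffices ∑ k, bPoly 𝔽 k ∘ₗ (pderiv k).toLinearMap = 0 by
    simpa using congr($this p)
  refine (basisMonomials (Fin 5) 𝔽).ext fun M => ?_
  have : (annRels 𝔽).mkQ (relDiv 𝔽 M) = 0 :=
    (Submodule.Quotient.mk_eq_zero _).2 (Submodule.subset_span (.inr ⟨M, rfl⟩))
  simp only [relDiv, map_sum, map_smul] at this
  simpa [coe_basisMonomials, bPoly_monomial] using this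

noncomputable def bField : (Fin 5 → MvPolynomial (Fin 5) 𝔽) →ₗ[𝔽] AnnRE 𝔽 :=
  LinearMap.lsum 𝔽 _ ℕ (bPoly 𝔽)

/-- Wedge with the Euler form `∑_h y_h dy_h`, reading `a_{hl}` as `dy_h ∧ dy_l`. -/
noncomputable def eulerWedge : (Fin 5 → MvPolynomial (Fin 5) 𝔽) →ₗ[𝔽] AnnRE 𝔽 :=
  LinearMap.lsum 𝔽 _ ℕ fun l => ∑ h, aPoly 𝔽 h l ∘ₗ LinearMap.mulLeft 𝔽 (X h)

theorem bField_gradient (p : MvPolynomial (Fin 5) 𝔽) : bField 𝔽 (fun k => pderiv k p) = 0 := by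
  simpa [bField] using sum_bPoly_pderiv 𝔽 p

theorem eulerWedge_single (l : Fin 5) (q : MvPolynomial (Fin 5) 𝔽) :
    eulerWedge 𝔽 (Pi.single l q) = ∑ h, aPoly 𝔽 h l (X h * q) := by
  rw [eulerWedge, LinearMap.lsum_piSingle]
  simp

theorem eulerWedge_skewGradient {n : ℕ} {q : MvPolynomial (Fin 5) 𝔽} (hq : q.IsHomogeneous n)
    (i j : Fin 5) : eulerWedge 𝔽 (skewGradient i j q) = ((n : 𝔽) + 3) • aPoly 𝔽 i j q := by
  have hdiag : ∑ h, aPoly 𝔽 i j (pderiv h (X h * q)) = ((5 + n : ℕ) : 𝔽) • aPoly 𝔽 i j q := by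
    rw [← map_sum, ← divergence_apply, divergence_X_mul hq, map_nsmul, Fintype.card_fin,
      Nat.cast_smul_eq_nsmul]
  have hcyc := Finset.sum_eq_zero fun h (_ : h ∈ Finset.univ) => aPoly_cyclic 𝔽 h i j (X h * q)
  rw [Finset.sum_add_distrib, Finset.sum_add_distrib, hdiag,
    sum_map_pderiv_X_mul (aPoly 𝔽 j ·) i, sum_map_pderiv_X_mul (aPoly 𝔽 · i) j] at hcyc
  simp only [aPoly_swap 𝔽 _ j, LinearMap.neg_apply, Finset.sum_neg_distrib] at hcyc
  rw [skewGradient, map_sub, eulerWedge_single, eulerWedge_single]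
  linear_combination (norm := module) -hcyc

theorem annEvenPiece_zero : annEvenPiece 𝔽 0 = ⊥ := by
  refine Submodule.span_eq_bot.2 ?_
  rintro _ ⟨i, j, M, hM, rfl⟩
  have h := eulerWedge_skewGradient 𝔽 (isHomogeneous_monomial (1 : 𝔽) hM) i j
  obtain rfl : M = 0 := (Finsupp.degree_eq_zero_iff M).1 hM
  rw [show skewGradient i j (monomial 0 (1 : 𝔽)) = 0 by simp [skewGradient], map_zero,
    aPoly_monomial, one_smul, Nat.cast_zero, zero_add, eq_comm, smul_eq_zero] at h
  exact h.resolve_left three_ne_zero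

theorem annEvenPiece_le (k : ℕ) :
    annEvenPiece 𝔽 k ≤ (homogeneousFields (Fin 5) 𝔽 (k - 1) ⊓
      LinearMap.ker (divergence (Fin 5) 𝔽)).map (eulerWedge 𝔽) := by
  refine Submodule.span_le.2 ?_
  rintro _ ⟨i, j, M, hM, rfl⟩
  have hq : (monomial M (1 : 𝔽)).IsHomogeneous k := isHomogeneous_monomial 1 hM
  refine ⟨((k : 𝔽) + 3)⁻¹ • skewGradient i j (monomial M 1), Submodule.smul_mem _ _
    ⟨skewGradient_mem_homogeneousFields hq i j, divergence_skewGradient i j _⟩, ?_⟩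
  have hk : (k : 𝔽) + 3 ≠ 0 := by exact_mod_cast (k + 2).succ_ne_zero
  rw [map_smul, eulerWedge_skewGradient 𝔽 hq, inv_smul_smul₀ hk, aPoly_monomial, one_smul]

theorem choose_four_le_finrank_map_divergence {K : Type*} [Field K] [CharZero K] (d : ℕ) :
    (d + 3).choose 4 ≤ finrank K ((homogeneousFields (Fin 5) K d).map (divergence (Fin 5) K)) := by
  cases d with
  | zero => simp
  | succ e =>
    have := Submodule.finrank_mono (homogeneousSubmodule_le_map_divergence (K := K) (σ := Fin 5) e)
    rwa [finrank_homogeneousSubmodule, card_fin_five_add_sub_one_choose] at this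

theorem finrank_annEvenPiece_succ_add_le (d : ℕ) :
    finrank 𝔽 (annEvenPiece 𝔽 (d + 1)) + (d + 3).choose 4 ≤ 5 * (d + 4).choose 4 := by
  have hpiece : finrank 𝔽 (annEvenPiece 𝔽 (d + 1)) ≤
      finrank 𝔽 ↥(homogeneousFields (Fin 5) 𝔽 d ⊓ LinearMap.ker (divergence (Fin 5) 𝔽)) :=
    (Submodule.finrank_mono (annEvenPiece_le 𝔽 (d + 1))).trans (Submodule.finrank_map_le _ _)
  have hrank := Submodule.finrank_map_add_finrank_inf_ker (divergence (Fin 5) 𝔽)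
    (homogeneousFields (Fin 5) 𝔽 d)
  rw [finrank_homogeneousFields, card_fin_five_add_sub_one_choose, Fintype.card_fin] at hrank
  have := choose_four_le_finrank_map_divergence (K := 𝔽) d
  omega

theorem annOddPiece_le (k : ℕ) :
    annOddPiece 𝔽 k ≤ (homogeneousFields (Fin 5) 𝔽 k).map (bField 𝔽) := by
  refine Submodule.span_le.2 ?_
  rintro _ ⟨i, M, hM, rfl⟩
  refine ⟨Pi.single i (monomial M 1),
    single_mem_homogeneousFields (isHomogeneous_monomial 1 hM) i, ?_⟩
  rw [bField, LinearMap.lsum_piSingle, bPoly_monomial, one_smul]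

theorem finrank_annOddPiece_add_le (k : ℕ) :
    finrank 𝔽 (annOddPiece 𝔽 k) + (k + 5).choose 4 ≤ 5 * (k + 4).choose 4 := by
  have hpiece := Submodule.finrank_mono (annOddPiece_le 𝔽 k)
  have hrank := Submodule.finrank_map_add_finrank_inf_ker (bField 𝔽) (homogeneousFields (Fin 5) 𝔽 k)
  rw [finrank_homogeneousFields, card_fin_five_add_sub_one_choose, Fintype.card_fin] at hrank
  have hker := (Submodule.finrank_mono (homogeneousSubmodule_le_map_eulerContract (bField 𝔽)
    (bField_gradient 𝔽) k)).trans (Submodule.finrank_map_le _ _)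
  rw [finrank_homogeneousSubmodule, card_fin_five_add_sub_one_choose] at hker
  rw [show k + 1 + 4 = k + 5 from rfl] at hker
  omega

/-- **Proposition 6.9.** For every `k ≥ 0`,
`dim g(RE(5,10))_{2k-4} ≤ k(k+1)(k+2)(k+4)/6` and
`dim g(RE(5,10))_{2k-3} ≤ k(k+2)(k+3)(k+4)/6`. -/
theorem annRE_dim_bounds (k : ℕ) :
    Module.finrank 𝔽 (annEvenPiece 𝔽 k) ≤ k * (k + 1) * (k + 2) * (k + 4) / 6 ∧
      Module.finrank 𝔽 (annOddPiece 𝔽 k) ≤ k * (k + 2) * (k + 3) * (k + 4) / 6 := by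
  refine ⟨?_, le_of_add_choose_four_succ_le k _ (finrank_annOddPiece_add_le 𝔽 k)⟩
  cases k with
  | zero => rw [annEvenPiece_zero, finrank_bot]
  | succ d => exact le_of_add_choose_four_pred_le d _ (finrank_annEvenPiece_succ_add_le 𝔽 d)
end
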